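/- arXiv:2106.13140 — 8 statements merged into one kernel-verified Lean document; each statement's English description precedes it below -/
import Mathlib

section
/- Let F be a field, D a division ring that is an F-algebra, and V a nonzero D-module that is a vector space over D of infinite dimension (i.e., V is not finite-dimensional over D). Let A = Module.End D V, the F-algebra of D-linear endomorphisms of V. Then for every n ≥ 1 and every family λ : S_n → F of scalars, not all zero, every T ∈ A can be written as T = Σ_{σ ∈ S_n} λ_σ · T_{σ(1)} ∘ T_{σ(2)} ∘ ⋯ ∘ T_{σ(n)} for some T_1, …, T_n ∈ A. -/
/-!
Since `V` is infinite-dimensional, `V ≃ₗ[D] (List (Fin n) →₀ V)`; on the right, the copies of `V`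
are indexed by words. Choose `σ₀` with `lam σ₀ ≠ 0` and let `i = σ₀ 0`. Substitute for `X j`,
`j ≠ i`, the operator prepending the letter `j` to the index, and leave `X i` unknown. If
`List.ofFn σ = head ++ i :: tail`, the monomial of `σ` sends the copy indexed by `u` through `X i`
on the copy indexed by `tail ++ u` and then prepends `head`. Tails have length at most `n - 1`,
with equality exactly when `head = []`, and such tails determine `σ`. So if `X i` vanishes off the
words beginning with `σ₀.tailWord i`, the equation `f (X 0, …, X (n - 1)) = T` on the copy `u`
says that `lam σ₀ • X i` on the copy `σ₀.tailWord i ++ u` equals `T` minus terms involving `X i`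
only on shorter words: a recursion on word length.
-/

open Finsupp

universe u v

section Evaluation

variable {F : Type*} [CommSemiring F] {A B : Type*} [Semiring A] [Semiring B] {n : ℕ}

def multilinearEval [Module F A] (lam : Equiv.Perm (Fin n) → F) (Ts : Fin n → A) : A :=
  ∑ σ : Equiv.Perm (Fin n), lam σ • (List.ofFn fun j => Ts (σ j)).prod

theorem map_multilinearEval [Algebra F A] [Algebra F B] {G : Type*} [FunLike G A B]
    [AlgHomClass G F A B] (φ : G) (lam : Equiv.Perm (Fin n) → F)
    (Ts : Fin n → A) : φ (multilinearEval lam Ts) = multilinearEval lam (φ ∘ Ts) := by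
  simp [multilinearEval, map_list_prod, List.map_ofFn, Function.comp_def]

end Evaluation

section InfiniteDimensional

theorem nonempty_prod_equiv_of_countable (κ : Type u) (ι : Type v) [Countable κ] [Nonempty κ]
    [Infinite ι] : Nonempty (κ × ι ≃ ι) := by
  rw [← Cardinal.lift_mk_eq', Cardinal.mk_prod, Cardinal.lift_mul, Cardinal.lift_lift,
    Cardinal.lift_lift]
  have hι : Cardinal.aleph0 ≤ Cardinal.lift.{max u v} (Cardinal.mk ι) := by simp
  exact Cardinal.mul_eq_right hι (Cardinal.lift_le_aleph0.mpr Cardinal.mk_le_aleph0 |>.trans hι)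
    (by simp)

theorem nonempty_linearEquiv_finsupp_self {R V : Type*} [Semiring R] [AddCommMonoid V]
    [Module R V] [Module.Free R V] (κ : Type*) [Countable κ] [Nonempty κ]
    (hV : ¬ Module.Finite R V) : Nonempty (V ≃ₗ[R] (κ →₀ V)) := by
  let b := Module.Free.chooseBasis R V
  have : Infinite (Module.Free.ChooseBasisIndex R V) :=
    not_finite_iff_infinite.mp fun _ => hV (Module.Finite.of_basis b)
  obtain ⟨e⟩ := nonempty_prod_equiv_of_countable κ (Module.Free.ChooseBasisIndex R V)
  exact ⟨b.repr ≪≫ₗ Finsupp.domLCongr e.symm ≪≫ₗ curryLinearEquiv R ≪≫ₗ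
    mapRange.linearEquiv b.repr.symm⟩

end InfiniteDimensional

section PrependWord

variable (R M : Type*) [Semiring R] [AddCommMonoid M] [Module R M] {α : Type*}

noncomputable def prependWord (l : List α) : Module.End R (List α →₀ M) :=
  lmapDomain M R (l ++ ·)

variable {R M}

theorem prependWord_nil : prependWord R M ([] : List α) = 1 :=
  lmapDomain_id M R

@[simp]
theorem prependWord_single (l u : List α) (v : M) :
    prependWord R M l (single u v) = single (l ++ u) v :=
  mapDomain_single

theorem prod_map_prependWord_singleton (l : List α) :
    (l.map fun j => prependWord R M [j]).prod = prependWord R M l := by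
  induction l with
  | nil => exact prependWord_nil.symm
  | cons j l ih =>
    rw [List.map_cons, List.prod_cons, ih, Module.End.mul_eq_comp, prependWord, prependWord,
      prependWord, ← lmapDomain_comp]
    rfl

end PrependWord

namespace Equiv.Perm

variable {n : ℕ} (σ τ : Equiv.Perm (Fin n)) (i : Fin n)

def headWord : List (Fin n) := (List.ofFn σ).take (σ.symm i)

def tailWord : List (Fin n) := (List.ofFn σ).drop (σ.symm i + 1)

theorem ofFn_eq_headWord_append_cons_tailWord :
    List.ofFn σ = σ.headWord i ++ i :: σ.tailWord i := by
  have h : (σ.symm i : ℕ) < (List.ofFn σ).length := by simp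
  conv_lhs => rw [← List.take_append_drop (σ.symm i) (List.ofFn σ), List.drop_eq_getElem_cons h]
  simp [headWord, tailWord]

theorem length_headWord_add_length_tailWord :
    (σ.headWord i).length + (σ.tailWord i).length + 1 = n := by
  have h := congrArg List.length (ofFn_eq_headWord_append_cons_tailWord σ i)
  simp only [List.length_ofFn, List.length_append, List.length_cons] at h
  omega

theorem notMem_headWord_and_tailWord : i ∉ σ.headWord i ∧ i ∉ σ.tailWord i := by
  have h := List.nodup_ofFn.mpr σ.injective
  rw [ofFn_eq_headWord_append_cons_tailWord σ i, List.nodup_middle, List.nodup_cons,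
    List.mem_append, not_or] at h
  exact h.1

theorem eq_of_headWord_eq_of_tailWord_eq (hh : σ.headWord i = τ.headWord i)
    (ht : σ.tailWord i = τ.tailWord i) : σ = τ := by
  apply Equiv.coe_fn_injective
  apply List.ofFn_injective
  rw [ofFn_eq_headWord_append_cons_tailWord σ i, ofFn_eq_headWord_append_cons_tailWord τ i, hh,
    ht]

theorem eq_of_tailWord_prefix_append (hσ : σ.headWord i = []) {u : List (Fin n)}
    (hlen : (σ.tailWord i).length ≤ (τ.tailWord i).length)
    (hpre : σ.tailWord i <+: τ.tailWord i ++ u) : τ = σ := by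
  have hσn := length_headWord_add_length_tailWord σ i
  have hτn := length_headWord_add_length_tailWord τ i
  rw [hσ, List.length_nil] at hσn
  have ht : σ.tailWord i = τ.tailWord i :=
    (List.prefix_of_prefix_length_le hpre (List.prefix_append _ _) hlen).eq_of_length (by omega)
  refine eq_of_headWord_eq_of_tailWord_eq τ σ i ?_ ht.symm
  rw [hσ, ← List.length_eq_zero_iff]
  omega

end Equiv.Perm

namespace MultilinearEval

variable {F R M : Type*} [Field F] [Ring R] [AddCommGroup M] [Module R M] [Module F M]
  [SMulCommClass R F M] {n : ℕ}

theorem prod_ofFn_eq_prependWord_mul_mul_prependWord {i : Fin n}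
    {Ts : Fin n → Module.End R (List (Fin n) →₀ M)}
    (hTs : ∀ j ≠ i, Ts j = prependWord R M [j]) (σ : Equiv.Perm (Fin n)) :
    (List.ofFn fun j => Ts (σ j)).prod =
      prependWord R M (σ.headWord i) * Ts i * prependWord R M (σ.tailWord i) := by
  obtain ⟨hh, ht⟩ := σ.notMem_headWord_and_tailWord i
  have hP : ∀ l : List (Fin n), i ∉ l → (l.map Ts).prod = prependWord R M l := fun l hl => by
    rw [← prod_map_prependWord_singleton]
    exact congrArg List.prod <|
      List.map_congr_left fun j hj => hTs j (ne_of_mem_of_not_mem hj hl)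
  rw [show (List.ofFn fun j => Ts (σ j)) = (List.ofFn σ).map Ts from List.map_ofFn.symm,
    σ.ofFn_eq_headWord_append_cons_tailWord i, List.map_append, List.map_cons, List.prod_append,
    List.prod_cons, hP _ hh, hP _ ht, mul_assoc]

variable (lam : Equiv.Perm (Fin n) → F) (σ₀ : Equiv.Perm (Fin n)) (i : Fin n)
  (T : Module.End R (List (Fin n) →₀ M))

noncomputable def preimageCol (w : List (Fin n)) : M →ₗ[R] (List (Fin n) →₀ M) :=
  if σ₀.tailWord i <+: w then
    (lam σ₀)⁻¹ • (T ∘ₗ lsingle (w.drop (σ₀.tailWord i).length) -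
      ∑ σ, if (σ.tailWord i).length < (σ₀.tailWord i).length then
        lam σ • (prependWord R M (σ.headWord i) ∘ₗ
          preimageCol (σ.tailWord i ++ w.drop (σ₀.tailWord i).length))
      else 0)
  else 0
termination_by w.length
decreasing_by
  have := ‹σ₀.tailWord i <+: w›.length_le
  simp only [List.length_append, List.length_drop]
  omega

noncomputable def preimage : Module.End R (List (Fin n) →₀ M) :=
  Finsupp.lsum ℕ (preimageCol lam σ₀ i T)

theorem preimageCol_of_not_prefix {w : List (Fin n)} (hw : ¬ σ₀.tailWord i <+: w) :
    preimageCol lam σ₀ i T w = 0 := by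
  rw [preimageCol, if_neg hw]

theorem preimageCol_append (u : List (Fin n)) :
    preimageCol lam σ₀ i T (σ₀.tailWord i ++ u) =
      (lam σ₀)⁻¹ • (T ∘ₗ lsingle u -
        ∑ σ, if (σ.tailWord i).length < (σ₀.tailWord i).length then
          lam σ • (prependWord R M (σ.headWord i) ∘ₗ
            preimageCol lam σ₀ i T (σ.tailWord i ++ u))
        else 0) := by
  rw [preimageCol, if_pos (List.prefix_append _ _), List.drop_left]

theorem update_preimage (hσ₀ : σ₀.headWord i = []) (hlam : lam σ₀ ≠ 0) :
    multilinearEval lam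
      (Function.update (fun j => prependWord R M [j]) i (preimage lam σ₀ i T)) = T := by
  set Ts := Function.update (fun j => prependWord R M [j]) i (preimage lam σ₀ i T)
  have hTs : ∀ j ≠ i, Ts j = prependWord R M [j] := fun j hj => Function.update_of_ne hj _ _
  set IsShort : Equiv.Perm (Fin n) → Prop :=
    fun σ => (σ.tailWord i).length < (σ₀.tailWord i).length
  refine lhom_ext fun u v => ?_
  have hmono : ∀ σ : Equiv.Perm (Fin n), (List.ofFn fun j => Ts (σ j)).prod (single u v) =
      prependWord R M (σ.headWord i) (preimageCol lam σ₀ i T (σ.tailWord i ++ u) v) :=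
      fun σ => by
    rw [prod_ofFn_eq_prependWord_mul_mul_prependWord hTs]
    simp [Ts, preimage]
  have hlong : ∑ σ with ¬ IsShort σ, lam σ •
      prependWord R M (σ.headWord i) (preimageCol lam σ₀ i T (σ.tailWord i ++ u) v) =
      lam σ₀ • preimageCol lam σ₀ i T (σ₀.tailWord i ++ u) v := by
    rw [Finset.sum_eq_single_of_mem σ₀ (by simp [IsShort]) fun σ hσ hne => ?_]
    · rw [hσ₀, prependWord_nil, Module.End.one_apply]
    rw [preimageCol_of_not_prefix, LinearMap.zero_apply, map_zero, smul_zero]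
    exact fun hpre =>
      hne (σ₀.eq_of_tailWord_prefix_append σ i hσ₀ (by simpa [IsShort] using hσ) hpre)
  calc multilinearEval lam Ts (single u v)
      = ∑ σ, lam σ •
          prependWord R M (σ.headWord i) (preimageCol lam σ₀ i T (σ.tailWord i ++ u) v) := by
        simp only [multilinearEval, LinearMap.sum_apply, LinearMap.smul_apply, hmono]
    _ = T (single u v) := by
      rw [← Finset.sum_filter_add_sum_filter_not _ IsShort, hlong, preimageCol_append,
        LinearMap.smul_apply, smul_smul, mul_inv_cancel₀ hlam, one_smul, Finset.sum_filter,
        LinearMap.sub_apply, LinearMap.sum_apply]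
      simp only [apply_ite (fun f : M →ₗ[R] (List (Fin n) →₀ M) => f v), LinearMap.smul_apply,
        LinearMap.comp_apply, LinearMap.zero_apply, lsingle_apply, IsShort]
      abel

end MultilinearEval

theorem stmt_1_general (F : Type*) [Field F] (D : Type*) [DivisionRing D] [Algebra F D]
    (V : Type*) [AddCommGroup V] [Module D V] [Module F V]
    [IsScalarTower F D V] [SMulCommClass D F V]
    (hV : ¬ Module.Finite D V)
    (n : ℕ) (hn : 1 ≤ n)
    (lam : Equiv.Perm (Fin n) → F) (hlam : lam ≠ 0)
    (T : Module.End D V) :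
    ∃ Ts : Fin n → Module.End D V,
      T = ∑ σ : Equiv.Perm (Fin n), lam σ • (List.ofFn fun j => Ts (σ j)).prod := by
  obtain ⟨e⟩ := nonempty_linearEquiv_finsupp_self (R := D) (V := V) (List (Fin n)) hV
  obtain ⟨σ₀, hσ₀⟩ := Function.ne_iff.mp hlam
  let i := σ₀ ⟨0, hn⟩
  have hhead : σ₀.headWord i = [] := by simp [Equiv.Perm.headWord, i]
  let φ := e.conjAlgEquiv F
  let X := MultilinearEval.preimage lam σ₀ i (φ T)
  refine ⟨φ.symm ∘ Function.update (fun j => prependWord D V [j]) i X, ?_⟩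
  have h := congrArg φ.symm (MultilinearEval.update_preimage lam σ₀ i (φ T) hhead hσ₀)
  rw [map_multilinearEval, AlgEquiv.symm_apply_apply] at h
  exact h.symm

/-- Every nonzero multilinear noncommutative polynomial is surjective on the
`F`-algebra of `D`-linear endomorphisms of an infinite-dimensional vector space
`V` over a division ring `D`. -/
theorem stmt_1 (F : Type*) [Field F] (D : Type*) [DivisionRing D] [Algebra F D]
    (V : Type*) [AddCommGroup V] [Module D V] [Module F V]
    [IsScalarTower F D V] [SMulCommClass D F V]
    [Nontrivial V] (hV : ¬ Module.Finite D V)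
    (n : ℕ) (hn : 1 ≤ n)
    (lam : Equiv.Perm (Fin n) → F) (hlam : lam ≠ 0)
    (T : Module.End D V) :
    ∃ Ts : Fin n → Module.End D V,
      T = ∑ σ : Equiv.Perm (Fin n), lam σ • (List.ofFn fun j => Ts (σ j)).prod :=
  stmt_1_general F D V hV n hn lam hlam T
end

section
/- Let D be a division ring and V an infinite-dimensional left D-vector space. Then there exists v ∈ End_D(V) such that the inner derivation ad_v is surjective: for every y ∈ End_D(V) there exists x ∈ End_D(V) with v ∘ x − x ∘ v = y. -/
open Module

/-- Key lemma: if `T` has a right inverse `S` and is locally nilpotent, then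
`ad_T` is surjective on `End D V`. -/
theorem key_adT {D V : Type*} [DivisionRing D] [AddCommGroup V] [Module D V]
    (T S : Module.End D V) (hTS : T * S = 1)
    (hnil : ∀ u : V, ∃ N : ℕ, (T ^ N) u = 0)
    (y : Module.End D V) : ∃ x : Module.End D V, T * x - x * T = y := by
  classical
  set g : V → ℕ → V := fun u j => (S ^ (j + 1)) (y ((T ^ j) u)) with hg
  have hpow : ∀ (u : V) (N : ℕ), (T ^ N) u = 0 → ∀ j, N ≤ j → (T ^ j) u = 0 := by
    intro u N hN j hj
    have h : T ^ j = T ^ (j - N) * T ^ N := by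
      rw [← pow_add]; congr 1; omega
    rw [h, Module.End.mul_apply, hN, map_zero]
  have hzero : ∀ (u : V) (N : ℕ), (T ^ N) u = 0 → ∀ j, N ≤ j → g u j = 0 := by
    intro u N hN j hj
    simp [hg, hpow u N hN j hj]
  have hsum : ∀ (u : V) (N : ℕ), (T ^ N) u = 0 →
      (∑ᶠ j : ℕ, g u j) = ∑ j ∈ Finset.range N, g u j := by
    intro u N hN
    apply finsum_eq_sum_of_support_subset
    intro j hj
    simp only [Function.mem_support] at hj
    simp only [Finset.coe_range, Set.mem_Iio]
    by_contra h
    exact hj (hzero u N hN j (by omega))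
  set f : V → V := fun u => ∑ᶠ j : ℕ, g u j with hf
  have hadd : ∀ u v : V, f (u + v) = f u + f v := by
    intro u v
    obtain ⟨Nu, hNu⟩ := hnil u
    obtain ⟨Nv, hNv⟩ := hnil v
    have hu : (T ^ max Nu Nv) u = 0 := hpow u Nu hNu _ (le_max_left _ _)
    have hv : (T ^ max Nu Nv) v = 0 := hpow v Nv hNv _ (le_max_right _ _)
    have huv : (T ^ max Nu Nv) (u + v) = 0 := by rw [map_add, hu, hv, add_zero]
    show (∑ᶠ j : ℕ, g (u + v) j) = (∑ᶠ j : ℕ, g u j) + ∑ᶠ j : ℕ, g v j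
    rw [hsum (u + v) _ huv, hsum u _ hu, hsum v _ hv, ← Finset.sum_add_distrib]
    apply Finset.sum_congr rfl
    intro j _
    simp [hg]
  have hsmul : ∀ (c : D) (u : V), f (c • u) = c • f u := by
    intro c u
    obtain ⟨N, hN⟩ := hnil u
    have hcu : (T ^ N) (c • u) = 0 := by rw [map_smul, hN, smul_zero]
    show (∑ᶠ j : ℕ, g (c • u) j) = c • ∑ᶠ j : ℕ, g u j
    rw [hsum (c • u) _ hcu, hsum u _ hN, Finset.smul_sum]
    apply Finset.sum_congr rfl
    intro j _
    simp [hg]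
  refine ⟨⟨⟨f, hadd⟩, hsmul⟩, ?_⟩
  ext u
  obtain ⟨N, hN⟩ := hnil u
  have hN1 : (T ^ (N + 1)) u = 0 := hpow u N hN _ (by omega)
  have hTu : (T ^ N) (T u) = 0 := by
    have : (T ^ N) (T u) = (T ^ (N + 1)) u := by
      rw [pow_succ, Module.End.mul_apply]
    rw [this, hN1]
  have hfu : f u = ∑ j ∈ Finset.range (N + 1), g u j := hsum u _ hN1
  have hfTu : f (T u) = ∑ j ∈ Finset.range N, g (T u) j := hsum (T u) _ hTu
  have hTS' : ∀ (j : ℕ) (w : V), T ((S ^ (j + 1)) w) = (S ^ j) w := by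
    intro j w
    have : T * S ^ (j + 1) = S ^ j := by
      rw [pow_succ', ← mul_assoc, hTS, one_mul]
    calc T ((S ^ (j + 1)) w) = (T * S ^ (j + 1)) w := rfl
      _ = (S ^ j) w := by rw [this]
  simp only [LinearMap.sub_apply, Module.End.mul_apply, LinearMap.coe_mk, AddHom.coe_mk]
  show T (f u) - f (T u) = y u
  rw [hfu, hfTu, map_sum]
  have h1 : ∀ j ∈ Finset.range (N + 1), T (g u j) = (S ^ j) (y ((T ^ j) u)) := by
    intro j _
    rw [hg]
    exact hTS' j _
  rw [Finset.sum_congr rfl h1, Finset.sum_range_succ']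
  have h2 : ∀ j ∈ Finset.range N, (S ^ (j + 1)) (y ((T ^ (j + 1)) u)) = g (T u) j := by
    intro j _
    have h3 : (T ^ (j + 1)) u = (T ^ j) (T u) := by
      rw [pow_succ, Module.End.mul_apply]
    simp only [hg, h3]
  rw [Finset.sum_congr rfl h2]
  simp

/-- If `V` is an infinite-dimensional vector space over a division ring `D`, then
`End_D(V)` has a surjective inner derivation. -/
theorem stmt_2 (D : Type*) [DivisionRing D]
    (V : Type*) [AddCommGroup V] [Module D V]
    (hV : ¬ Module.Finite D V) :
    ∃ v : Module.End D V, ∀ y : Module.End D V,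
      ∃ x : Module.End D V, v * x - x * v = y := by
  classical
  -- Get a basis of `V`
  obtain ⟨ι, b⟩ := Module.Free.exists_basis (R := D) (M := V)
  have hι : Infinite ι := by
    by_contra h
    rw [not_infinite_iff_finite] at h
    exact hV (Module.Finite.of_basis b)
  -- Reindex the basis by `ι × ℕ`
  have hcard : Nonempty (ι ≃ ι × ℕ) := by
    rw [← Cardinal.eq]
    simp [Cardinal.mk_prod, Cardinal.mul_aleph0_eq (Cardinal.aleph0_le_mk ι)]
  obtain ⟨e⟩ := hcard
  set c : Basis (ι × ℕ) D V := b.reindex e with hc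
  -- Define shift operators
  set S : Module.End D V := Basis.constr c ℕ (fun p => c (p.1, p.2 + 1)) with hS
  set T : Module.End D V := Basis.constr c ℕ
    (fun p => match p.2 with
      | 0 => 0
      | n + 1 => c (p.1, n)) with hT
  have hTc : ∀ (i : ι) (n : ℕ), T (c (i, n + 1)) = c (i, n) := by
    intro i n
    rw [hT, Basis.constr_basis]
  have hTc0 : ∀ (i : ι), T (c (i, 0)) = 0 := by
    intro i
    rw [hT, Basis.constr_basis]
  have hTS : T * S = 1 := by
    apply Module.Basis.ext c
    intro p
    rw [Module.End.mul_apply, hS, Basis.constr_basis, Module.End.one_apply]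
    exact hTc p.1 p.2
  have hnilb : ∀ (i : ι) (n : ℕ), (T ^ (n + 1)) (c (i, n)) = 0 := by
    intro i n
    induction n with
    | zero => simpa using hTc0 i
    | succ n ih =>
      rw [pow_succ, Module.End.mul_apply, hTc i n, ih]
  have hnil : ∀ u : V, ∃ N : ℕ, (T ^ N) u = 0 := by
    intro u
    set U : Submodule D V :=
      { carrier := {u | ∃ N : ℕ, (T ^ N) u = 0}
        add_mem' := by
          rintro a b ⟨Na, ha⟩ ⟨Nb, hb⟩
          refine ⟨max Na Nb, ?_⟩
          have hpa : (T ^ max Na Nb) a = 0 := by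
            have h : T ^ max Na Nb = T ^ (max Na Nb - Na) * T ^ Na := by
              rw [← pow_add]; congr 1; omega
            rw [h, Module.End.mul_apply, ha, map_zero]
          have hpb : (T ^ max Na Nb) b = 0 := by
            have h : T ^ max Na Nb = T ^ (max Na Nb - Nb) * T ^ Nb := by
              rw [← pow_add]; congr 1; omega
            rw [h, Module.End.mul_apply, hb, map_zero]
          rw [map_add, hpa, hpb, add_zero]
        zero_mem' := ⟨0, by simp⟩
        smul_mem' := by
          rintro d a ⟨N, ha⟩
          exact ⟨N, by rw [map_smul, ha, smul_zero]⟩ }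
    have hspan : ⊤ ≤ U := by
      rw [← c.span_eq]
      apply Submodule.span_le.mpr
      rintro _ ⟨p, rfl⟩
      exact ⟨p.2 + 1, hnilb p.1 p.2⟩
    exact hspan (Submodule.mem_top (x := u))
  exact ⟨T, fun y => key_adT T S hTS hnil y⟩
end

section
/- Let F be a field of characteristic 0 and A a unital associative F-algebra. Suppose v, w ∈ A satisfy v*w − w*v = 1, and suppose A is generated as a unital F-algebra by the set {v, w} ∪ C, where C is a subset of {t ∈ A : t*v = v*t and t*w = w*t}. Then the inner derivation ad_v : A → A, ad_v(x) = v*x − x*v, is surjective, i.e., [v, A] = A. -/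
section aux

variable {F : Type*} [Field F] {A : Type*} [Ring A] [Algebra F A]

/-- The inner derivation `ad_v` as a linear map. -/
noncomputable def adL (v : A) : A →ₗ[F] A :=
  { toFun := fun x => v * x - x * v
    map_add' := by intro x y; noncomm_ring
    map_smul' := by intro c x; simp [mul_smul_comm, smul_mul_assoc, smul_sub] }

lemma adL_apply (v x : A) : (adL (F := F) v) x = v * x - x * v := rfl

lemma adL_leibniz (v x y : A) :
    (adL (F := F) v) (x * y) = (adL (F := F) v) x * y + x * (adL (F := F) v) y := by
  simp only [adL_apply]; noncomm_ring

lemma adL_pow_mul_zero (v : A) :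
    ∀ k m n : ℕ, ∀ x y : A, m + n ≤ k →
      ((adL (F := F) v) ^ m) x = 0 → ((adL (F := F) v) ^ n) y = 0 →
      ((adL (F := F) v) ^ (m + n)) (x * y) = 0 := by
  set D := adL (F := F) v with hD
  intro k
  induction k with
  | zero =>
    intro m n x y hmn hx hy
    obtain rfl : m = 0 := by omega
    obtain rfl : n = 0 := by omega
    simp only [pow_zero, Module.End.one_apply] at hx
    rw [hx, zero_mul, map_zero]
  | succ k ih =>
    intro m n x y hmn hx hy
    match m, n with
    | 0, n =>
      simp only [pow_zero, Module.End.one_apply] at hx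
      rw [hx, zero_mul, map_zero]
    | m + 1, 0 =>
      simp only [pow_zero, Module.End.one_apply] at hy
      rw [hy, mul_zero, map_zero]
    | m + 1, n + 1 =>
      have hDx : (D ^ m) (D x) = 0 := by
        rw [← Module.End.mul_apply, ← pow_succ]; exact hx
      have hDy : (D ^ n) (D y) = 0 := by
        rw [← Module.End.mul_apply, ← pow_succ]; exact hy
      have h1 : (D ^ (m + (n + 1))) (D x * y) = 0 :=
        ih m (n + 1) (D x) y (by omega) hDx hy
      have h2 : (D ^ (m + 1 + n)) (x * D y) = 0 :=
        ih (m + 1) n x (D y) (by omega) hx hDy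
      have key : (D ^ (m + 1 + (n + 1))) (x * y)
          = (D ^ (m + n + 1)) (D (x * y)) := by
        have e : m + 1 + (n + 1) = (m + n + 1) + 1 := by omega
        rw [e, pow_succ, Module.End.mul_apply]
      rw [key, adL_leibniz, map_add]
      have e1 : m + (n + 1) = m + n + 1 := by omega
      have e2 : m + 1 + n = m + n + 1 := by omega
      rw [e1] at h1
      rw [e2] at h2
      rw [h1, h2, add_zero]

end aux

/-- If `char F = 0`, `v*w - w*v = 1`, and `A` is generated as a unital `F`-algebra
by `{v, w}` together with a set `C` of elements commuting with both `v` and `w`,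
then the inner derivation `ad_v` is surjective. -/
theorem stmt_3 (F : Type*) [Field F] [CharZero F] (A : Type*) [Ring A] [Algebra F A]
    (v w : A) (hvw : v * w - w * v = 1)
    (C : Set A) (hC : C ⊆ {t : A | t * v = v * t ∧ t * w = w * t})
    (hgen : Algebra.adjoin F ({v, w} ∪ C) = ⊤) :
    Function.Surjective (fun x : A => v * x - x * v) := by
  set D := adL (F := F) v with hD
  -- Step 1: every element is killed by some power of D.
  have key : ∀ x : A, ∃ n : ℕ, (D ^ n) x = 0 := by
    let B : Subalgebra F A :=
      { carrier := {x : A | ∃ n : ℕ, (D ^ n) x = 0}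
        mul_mem' := by
          rintro x y ⟨m, hm⟩ ⟨n, hn⟩
          exact ⟨m + n, adL_pow_mul_zero v (m + n) m n x y le_rfl hm hn⟩
        add_mem' := by
          rintro x y ⟨m, hm⟩ ⟨n, hn⟩
          refine ⟨m + n, ?_⟩
          rw [map_add]
          have hx : (D ^ (m + n)) x = 0 := by
            rw [add_comm, pow_add, Module.End.mul_apply, hm, map_zero]
          have hy : (D ^ (m + n)) y = 0 := by
            rw [pow_add, Module.End.mul_apply, hn, map_zero]
          rw [hx, hy, add_zero]
        one_mem' := by
          refine ⟨1, ?_⟩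
          simp [hD, adL_apply]
        zero_mem' := ⟨0, by simp⟩
        algebraMap_mem' := by
          intro r
          refine ⟨1, ?_⟩
          simp [hD, adL_apply, Algebra.commutes] }
    have hle : Algebra.adjoin F ({v, w} ∪ C) ≤ B := by
      apply Algebra.adjoin_le
      rintro t (ht | ht)
      · rcases ht with rfl | ht
        · exact ⟨1, by simp [hD, adL_apply]⟩
        · rcases ht with rfl
          refine ⟨2, ?_⟩
          have h1 : D t = 1 := by rw [hD, adL_apply]; exact hvw
          have h2 : (D ^ 2) t = D 1 := by
            rw [pow_two, Module.End.mul_apply, h1]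
          rw [h2]
          simp [hD, adL_apply]
      · obtain ⟨h1, h2⟩ := hC ht
        refine ⟨1, ?_⟩
        simp only [pow_one, hD, adL_apply]
        rw [← h1, sub_self]
    intro x
    have : x ∈ B := hle (hgen ▸ Algebra.mem_top : x ∈ Algebra.adjoin F ({v, w} ∪ C))
    exact this
  -- Step 2: the basic "integration by parts" identity.
  have hbase : ∀ z : A, D (w * z) = z + w * D z := by
    intro z
    have h : v * (w * z) - (w * z) * v = (v * w - w * v) * z + w * (v * z - z * v) := by
      noncomm_ring
    rw [hD, adL_apply, h, hvw, one_mul, adL_apply]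
  have hpow : ∀ m : ℕ, ∀ z : A,
      D (w ^ (m + 1) * z) = ((m : F) + 1) • (w ^ m * z) + w ^ (m + 1) * D z := by
    intro m
    induction m with
    | zero => intro z; simpa using hbase z
    | succ m ih =>
      intro z
      have h1 : w ^ (m + 2) * z = w * (w ^ (m + 1) * z) := by
        rw [← mul_assoc, ← pow_succ']
      rw [h1, hbase, ih]
      rw [mul_add, mul_smul_comm, ← mul_assoc, ← pow_succ', ← mul_assoc, ← pow_succ']
      have h2 : ((m : F) + 1 + 1) • (w ^ (m + 1) * z)
          = ((m : F) + 1) • (w ^ (m + 1) * z) + w ^ (m + 1) * z := by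
        rw [add_smul, one_smul]
      push_cast
      rw [h2]
      abel
  -- Step 3: integrate.
  have hint : ∀ n : ℕ, ∀ x : A, (D ^ n) x = 0 → ∀ m : ℕ, ∃ y : A, D y = w ^ m * x := by
    intro n
    induction n with
    | zero =>
      intro x hx m
      simp only [pow_zero, Module.End.one_apply] at hx
      exact ⟨0, by rw [hx, mul_zero, map_zero]⟩
    | succ n ih =>
      intro x hx m
      have hDx : (D ^ n) (D x) = 0 := by
        rw [← Module.End.mul_apply, ← pow_succ]; exact hx
      obtain ⟨u, hu⟩ := ih (D x) hDx (m + 1)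
      refine ⟨((m : F) + 1)⁻¹ • (w ^ (m + 1) * x - u), ?_⟩
      have hne : (m : F) + 1 ≠ 0 := Nat.cast_add_one_ne_zero m
      rw [map_smul, map_sub, hpow m x, hu]
      rw [add_sub_cancel_right, smul_smul, inv_mul_cancel₀ hne, one_smul]
  intro x
  obtain ⟨n, hn⟩ := key x
  obtain ⟨y, hy⟩ := hint n x hn 0
  rw [pow_zero, one_mul, hD, adL_apply] at hy
  exact ⟨y, hy⟩
end

section
/- Let F be a field, n ≥ 1, V = (ℤ^n × Fin n) →₀ F with basis Y_{b,i} and commuting shift operators T_j(Y_{b,i}) = Y_{b − e_j,i}. Fix i ∈ {1,…,n} and let U be an F-subspace of V such that Y_{b,i} ∈ U for all but finitely many b ∈ ℤ^n. Suppose there exists a nonzero polynomial f ∈ F[W_i,…,W_n] such that f(T_i,…,T_n)(Y_{b,i}) ∈ U for every b ∈ ℤ^n. Then Y_{b,i} ∈ U for every b ∈ ℤ^n. -/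
/-- The basis vector `Y_{b,i}` of `(ℤ^n × Fin n) →₀ F`. -/
noncomputable def YV (F : Type*) [Field F] (n : ℕ) (b : Fin n → ℤ) (i : Fin n) :
    ((Fin n → ℤ) × Fin n) →₀ F :=
  Finsupp.single (b, i) 1

/-- Evaluation of a polynomial `f` at the commuting shift operators
`T_1, …, T_n`, where `T_j (Y_{b,i}) = Y_{b - e_j, i}`: each monomial `W^d` acts as
the shift by `d`. -/
noncomputable def polyShift (F : Type*) [Field F] (n : ℕ)
    (f : MvPolynomial (Fin n) F) :
    Module.End F (((Fin n → ℤ) × Fin n) →₀ F) :=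
  ∑ d ∈ f.support, MvPolynomial.coeff d f •
    Finsupp.lmapDomain F F (fun p => (fun j => p.1 j - (d j : ℤ), p.2))

/-!
Order `ℤ^n` lexicographically; this is a linearly ordered group. If `d₀` is the lex-largest
exponent of `f`, then `f(T)(Y_{b + d₀, i})` is a nonzero multiple of `Y_{b,i}` plus a combination
of `Y_{c,i}` with `c` lex-larger than `b`. So `Y_{b,i} ∈ U` as soon as every lex-larger `Y_{c,i}`
is, and since only finitely many `Y_{b,i}` lie outside `U`, the largest of them gives a
contradiction.
-/

theorem Set.Finite.forall_of_forall_gt_imp {G : Type*} [LinearOrder G] {P : G → Prop}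
    (hfin : {g | ¬ P g}.Finite) (hstep : ∀ g, (∀ h, g < h → P h) → P g) : ∀ g, P g := by
  by_contra! hbad
  obtain ⟨g, hg, hgmax⟩ := Set.exists_max_image _ id hfin hbad
  exact hg (hstep g fun h hgh => by_contra fun hh => (hgmax h hh).not_gt hgh)

section Recurrence

variable {K M G ι : Type*} [Field K] [AddCommGroup M] [Module K M]
  [AddCommGroup G] [LinearOrder G] [IsOrderedAddMonoid G]
  {U : Submodule K M} {y : G → M} {s : Finset ι} {a : ι → K} {e : ι → G}

theorem Submodule.mem_of_recurrence_of_forall_gt (he : Function.Injective e)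
    (hs : s.Nonempty) (ha : ∀ k ∈ s, a k ≠ 0)
    (hrec : ∀ g, ∑ k ∈ s, a k • y (g - e k) ∈ U) (g : G)
    (hgt : ∀ h, g < h → y h ∈ U) :
    y g ∈ U := by
  classical
  obtain ⟨k₀, hk₀, hk₀max⟩ := s.exists_max_image e hs
  have hrest : ∑ k ∈ s.erase k₀, a k • y (g + e k₀ - e k) ∈ U := by
    refine U.sum_mem fun k hk => U.smul_mem _ (hgt _ ?_)
    obtain ⟨hne, hks⟩ := Finset.mem_erase.1 hk
    have hlt : e k < e k₀ := (hk₀max k hks).lt_of_ne (he.ne hne)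
    rw [add_sub_assoc]
    exact lt_add_of_pos_right g (sub_pos.2 hlt)
  have hlead : a k₀ • y g ∈ U := by
    have := U.sub_mem (hrec (g + e k₀)) hrest
    rwa [← Finset.add_sum_erase s _ hk₀, add_sub_cancel_right, add_sub_cancel_right] at this
  simpa [ha k₀ hk₀] using U.smul_mem (a k₀)⁻¹ hlead

theorem Submodule.forall_mem_of_recurrence (he : Function.Injective e)
    (hs : s.Nonempty) (ha : ∀ k ∈ s, a k ≠ 0)
    (hrec : ∀ g, ∑ k ∈ s, a k • y (g - e k) ∈ U) (hfin : {g | y g ∉ U}.Finite) :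
    ∀ g, y g ∈ U :=
  hfin.forall_of_forall_gt_imp (mem_of_recurrence_of_forall_gt he hs ha hrec)

end Recurrence

theorem polyShift_YV (F : Type*) [Field F] (n : ℕ) (f : MvPolynomial (Fin n) F)
    (b : Fin n → ℤ) (i : Fin n) :
    polyShift F n f (YV F n b i) =
      ∑ d ∈ f.support, MvPolynomial.coeff d f • YV F n (b - fun j => (d j : ℤ)) i := by
  simp [polyShift, YV, LinearMap.sum_apply, Finsupp.mapDomain_single, Pi.sub_def]

theorem stmt_10_general (F : Type*) [Field F] (n : ℕ)
    (U : Submodule F (((Fin n → ℤ) × Fin n) →₀ F))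
    (i : Fin n)
    (hfin : {b : Fin n → ℤ | YV F n b i ∉ U}.Finite)
    (f : MvPolynomial (Fin n) F) (hf : f ≠ 0)
    (hU : ∀ b : Fin n → ℤ, polyShift F n f (YV F n b i) ∈ U) :
    ∀ b : Fin n → ℤ, YV F n b i ∈ U := by
  have he : Function.Injective fun d : Fin n →₀ ℕ => toLex fun j => (d j : ℤ) :=
    fun d d' h => Finsupp.ext fun j => by exact_mod_cast congrFun (toLex.injective h) j
  have := Submodule.forall_mem_of_recurrence
    (y := fun g : Lex (Fin n → ℤ) => YV F n (ofLex g) i) he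
    (MvPolynomial.support_nonempty.2 hf) (fun d => MvPolynomial.mem_support_iff.1)
    (fun g => polyShift_YV F n f (ofLex g) i ▸ hU (ofLex g)) hfin
  exact fun b => this (toLex b)

/-- Lemma 3.3: if `Y_{b,i} ∈ U` for all but finitely many `b` and the `Y_{b,i}`
satisfy a recurrence relation, then `Y_{b,i} ∈ U` for all `b`. -/
theorem stmt_10 (F : Type*) [Field F] (n : ℕ) (hn : 1 ≤ n)
    (U : Submodule F (((Fin n → ℤ) × Fin n) →₀ F))
    (i : Fin n)
    (hfin : {b : Fin n → ℤ | YV F n b i ∉ U}.Finite)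
    (f : MvPolynomial (Fin n) F) (hf : f ≠ 0)
    (hvars : ∀ j : Fin n, j < i → MvPolynomial.degreeOf j f = 0)
    (hU : ∀ b : Fin n → ℤ, polyShift F n f (YV F n b i) ∈ U) :
    ∀ b : Fin n → ℤ, YV F n b i ∈ U :=
  stmt_10_general F n U i hfin f hf hU
end

section
/- Let F be a field, n ≥ 1, r ≥ 0, and σ ∈ S_n. Let m : ℤ^n × {1,…,n} → F be a function such that m(b', i) = 0 whenever b' ∉ B_r (where B_r ⊆ ℕ^n ⊆ ℤ^n). Suppose that for every k ≥ 1 and every b ∈ B_{r+k}, Σ_{i=1}^n Σ_{c ∈ C_σ^{k,i}} μ_σ^{c,i} · m(b − c, i) = 0 holds in F. Then m(b', i) = 0 for all b' ∈ B_r and all i ∈ {1,…,n}. -/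
/-- The set `C_σ^{t,i}` of tuples `c ∈ ℕ^n` with `c_{σ(1)} = ⋯ = c_{σ(i-1)} = 0`,
`c_{σ(i)} ≥ 1`, and `Σ_j c_j = t`. -/
def Cset (n : ℕ) (σ : Equiv.Perm (Fin n)) (t : ℕ) (i : Fin n) : Finset (Fin n → ℕ) :=
  (Finset.Nat.antidiagonalTuple n t).filter
    fun c => (∀ j : Fin n, j < i → c (σ j) = 0) ∧ 1 ≤ c (σ i)

/-- The multinomial coefficient `μ_σ^{c,i} = (Σ_j c_j)! / (c_{σ(i)}! ⋯ c_{σ(n)}!)`. -/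
def muC (n : ℕ) (σ : Equiv.Perm (Fin n)) (i : Fin n) (c : Fin n → ℕ) : ℕ :=
  Nat.multinomial (Finset.univ.filter fun j : Fin n => i ≤ j) (fun j => c (σ j))

lemma muC_single (n : ℕ) (σ : Equiv.Perm (Fin n)) (i : Fin n) (K : ℕ) :
    muC n σ i (fun l => if l = σ i then K else 0) = 1 := by
  unfold muC Nat.multinomial
  have h1 : ∀ j : Fin n, (if σ j = σ i then K else 0) = (if j = i then K else 0) := by
    intro j
    simp [Equiv.apply_eq_iff_eq]
  have hmem : i ∈ Finset.univ.filter fun j : Fin n => i ≤ j := by simp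
  have hs : (∑ j ∈ Finset.univ.filter fun j : Fin n => i ≤ j,
      (if σ j = σ i then K else 0)) = K := by
    simp only [h1]
    rw [Finset.sum_ite_eq' _ i (fun _ => K)]
    simp
  have hp : (∏ j ∈ Finset.univ.filter fun j : Fin n => i ≤ j,
      Nat.factorial (if σ j = σ i then K else 0)) = Nat.factorial K := by
    simp only [h1, apply_ite Nat.factorial, Nat.factorial_zero]
    rw [Finset.prod_ite_eq' _ i (fun _ => Nat.factorial K)]
    simp [hmem]
  simp only [hs, hp]
  exact Nat.div_self (Nat.factorial_pos K)

/-- Proposition 3.4: the system of linear equations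
`Σ_i Σ_{c ∈ C_σ^{k,i}} μ_σ^{c,i} m(b - c, i) = 0` (for all `k ≥ 1`, `b ∈ B_{r+k}`)
has only the trivial solution among families `m` vanishing outside `B_r`. -/
theorem stmt_11 (F : Type*) [Field F] (n : ℕ) (hn : 1 ≤ n) (r : ℕ)
    (σ : Equiv.Perm (Fin n))
    (m : (Fin n → ℤ) → Fin n → F)
    (hm0 : ∀ (b' : Fin n → ℤ) (i : Fin n),
      ¬ ((∀ j, 0 ≤ b' j) ∧ ∑ j, b' j = (r : ℤ)) → m b' i = 0)
    (hsys : ∀ k : ℕ, 1 ≤ k → ∀ b : Fin n → ℕ, (∑ j, b j) = r + k →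
      ∑ i : Fin n, ∑ c ∈ Cset n σ k i,
        (muC n σ i c : F) * m (fun j => (b j : ℤ) - (c j : ℤ)) i = 0) :
    ∀ (b' : Fin n → ℕ), (∑ j, b' j) = r →
      ∀ i : Fin n, m (fun j => (b' j : ℤ)) i = 0 := by
  -- helper: a term vanishes if some coordinate of `b - c` is negative
  have hneg : ∀ (b c : Fin n → ℕ) (j : Fin n), (¬ ∀ l, c l ≤ b l) →
      m (fun l => (b l : ℤ) - (c l : ℤ)) j = 0 := by
    intro b c j h
    apply hm0
    push_neg at h ⊢
    intro hnonneg
    obtain ⟨l, hl⟩ := h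
    have := hnonneg l
    exfalso; omega
  -- key claim, by strong induction on the measure `i * (r+1) + Σ_{l > i} b' (σ l)`
  have key : ∀ (N : ℕ) (i : Fin n) (b' : Fin n → ℕ), (∑ j, b' j) = r →
      (i : ℕ) * (r + 1) + (∑ l ∈ Finset.univ.filter fun l : Fin n => i < l, b' (σ l)) ≤ N →
      m (fun j => (b' j : ℤ)) i = 0 := by
    intro N
    induction N using Nat.strong_induction_on with
    | _ N ih =>
    intro i b' hb'sum hmeas
    set b : Fin n → ℕ := fun l => b' l + if l = σ i then r + 1 else 0 with hbdef
    have hbsum : (∑ j, b j) = r + (r + 1) := by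
      rw [hbdef]
      rw [Finset.sum_add_distrib, hb'sum, Finset.sum_ite_eq' _ (σ i) (fun _ => r + 1)]
      simp
    have E := hsys (r + 1) (by omega) b hbsum
    set c₀ : Fin n → ℕ := fun l => if l = σ i then r + 1 else 0 with hc₀def
    have hc₀mem : c₀ ∈ Cset n σ (r + 1) i := by
      rw [Cset, Finset.mem_filter, Finset.Nat.mem_antidiagonalTuple]
      refine ⟨?_, fun j hj => ?_, ?_⟩
      · rw [hc₀def, Finset.sum_ite_eq' _ (σ i) (fun _ => r + 1)]; simp
      · rw [hc₀def]
        simp only [ite_eq_right_iff]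
        intro hEq
        exact absurd (σ.injective hEq) (ne_of_lt hj)
      · simp [hc₀def]
    -- the sum over `j ≠ i` vanishes
    have houter : ∀ j : Fin n, j ∈ (Finset.univ : Finset (Fin n)) → j ≠ i →
        (∑ c ∈ Cset n σ (r + 1) j,
          (muC n σ j c : F) * m (fun l => (b l : ℤ) - (c l : ℤ)) j) = 0 := by
      intro j _ hji
      apply Finset.sum_eq_zero
      intro c hc
      rw [Cset, Finset.mem_filter, Finset.Nat.mem_antidiagonalTuple] at hc
      obtain ⟨hcsum, hczero, hcpos⟩ := hc
      rcases lt_or_gt_of_ne hji with hlt | hgt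
      · -- case j < i : use the induction hypothesis
        by_cases hle : ∀ l, c l ≤ b l
        · set b'' : Fin n → ℕ := fun l => b l - c l with hb''def
          have hfun : (fun l => (b l : ℤ) - (c l : ℤ)) = fun l => ((b'' l : ℕ) : ℤ) := by
            funext l
            simp only [hb''def]
            have := hle l
            push_cast [Nat.cast_sub (hle l)]
            ring
          have hb''sum : (∑ l, b'' l) = r := by
            have h1 : (∑ l, b'' l) + (∑ l, c l) = ∑ l, b l := by
              rw [← Finset.sum_add_distrib]
              apply Finset.sum_congr rfl
              intro l _
              simp only [hb''def]
              have := hle l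
              omega
            omega
          have hb''bound : (∑ l ∈ Finset.univ.filter fun l : Fin n => j < l, b'' (σ l)) ≤ r := by
            calc (∑ l ∈ Finset.univ.filter fun l : Fin n => j < l, b'' (σ l))
                ≤ ∑ l, b'' (σ l) := Finset.sum_le_sum_of_subset (Finset.filter_subset _ _)
              _ = ∑ l, b'' l := Equiv.sum_comp σ b''
              _ = r := hb''sum
          have hNpos : (j : ℕ) * (r + 1)
              + (∑ l ∈ Finset.univ.filter fun l : Fin n => j < l, b'' (σ l)) < N := by
            have hi1 : (j : ℕ) + 1 ≤ (i : ℕ) := hlt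
            have h2 : ((j : ℕ) + 1) * (r + 1) ≤ (i : ℕ) * (r + 1) :=
              Nat.mul_le_mul_right _ hi1
            have h3 : (j : ℕ) * (r + 1) + (r + 1) = ((j : ℕ) + 1) * (r + 1) := by ring
            omega
          rw [hfun, ih _ hNpos j b'' hb''sum (le_refl _)]
          ring
        · rw [hneg b c j hle]; ring
      · -- case j > i : coordinate σ i of b - c is too big
        by_cases hle : ∀ l, c l ≤ b l
        · exfalso
          have hci : c (σ i) = 0 := hczero i hgt
          have hbi : b (σ i) = b' (σ i) + (r + 1) := by simp [hbdef]
          have hone : b (σ i) - c (σ i) ≤ ∑ l, (b l - c l) := by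
            apply Finset.single_le_sum (f := fun l => b l - c l) (fun l _ => Nat.zero_le _)
              (Finset.mem_univ (σ i))
          have hsumbc : (∑ l, (b l - c l)) = r := by
            have h1 : (∑ l, (b l - c l)) + (∑ l, c l) = ∑ l, b l := by
              rw [← Finset.sum_add_distrib]
              apply Finset.sum_congr rfl
              intro l _
              have := hle l
              omega
            omega
          omega
        · rw [hneg b c j hle]; ring
    rw [Finset.sum_eq_single_of_mem i (Finset.mem_univ i) houter] at E
    -- now the inner sum: terms with c ≠ c₀ vanish
    have hinner : ∀ c ∈ Cset n σ (r + 1) i, c ≠ c₀ →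
        (muC n σ i c : F) * m (fun l => (b l : ℤ) - (c l : ℤ)) i = 0 := by
      intro c hc hcne
      rw [Cset, Finset.mem_filter, Finset.Nat.mem_antidiagonalTuple] at hc
      obtain ⟨hcsum, hczero, hcpos⟩ := hc
      by_cases hle : ∀ l, c l ≤ b l
      · -- there is l' > i with c (σ l') > 0
        have hex : ∃ l' : Fin n, i < l' ∧ 0 < c (σ l') := by
          by_contra hno
          push_neg at hno
          apply hcne
          funext l
          rcases lt_trichotomy ((σ.symm l) : Fin n) i with h | h | h
          · have hc0 : c l = 0 := by
              have := hczero (σ.symm l) h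
              simpa using this
            rw [hc0, hc₀def]
            have hne : l ≠ σ i := by
              intro hEq
              apply ne_of_lt h
              rw [hEq]; simp
            simp [hne]
          · have hl : l = σ i := by
              rw [← h]; simp
            subst hl
            simp only [hc₀def, if_pos rfl]
            have hsum' : (∑ l', c (σ l')) = r + 1 := by
              rw [Equiv.sum_comp σ c]; exact hcsum
            have hsingle : (∑ l' : Fin n, c (σ l')) = c (σ i) := by
              apply Finset.sum_eq_single_of_mem i (Finset.mem_univ i)
              intro l' _ hl'
              rcases lt_or_gt_of_ne hl' with h1 | h1
              · exact hczero l' h1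
              · have := hno l' h1; omega
            rw [← hsingle, hsum']
          · have hc0 : c l = 0 := by
              have := hno (σ.symm l) h
              simpa using this
            rw [hc0, hc₀def]
            have hne : l ≠ σ i := by
              intro hEq
              apply ne_of_gt h
              rw [hEq]; simp
            simp [hne]
        obtain ⟨l', hl'i, hl'pos⟩ := hex
        set b'' : Fin n → ℕ := fun l => b l - c l with hb''def
        have hfun : (fun l => (b l : ℤ) - (c l : ℤ)) = fun l => ((b'' l : ℕ) : ℤ) := by
          funext l
          simp only [hb''def]
          push_cast [Nat.cast_sub (hle l)]
          ring
        have hb''sum : (∑ l, b'' l) = r := by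
          have h1 : (∑ l, b'' l) + (∑ l, c l) = ∑ l, b l := by
            rw [← Finset.sum_add_distrib]
            apply Finset.sum_congr rfl
            intro l _
            simp only [hb''def]
            have := hle l
            omega
          omega
        -- the measure strictly decreases
        have hdec : (∑ l ∈ Finset.univ.filter fun l : Fin n => i < l, b'' (σ l))
            < (∑ l ∈ Finset.univ.filter fun l : Fin n => i < l, b' (σ l)) := by
          have heq : ∀ l ∈ Finset.univ.filter fun l : Fin n => i < l,
              b'' (σ l) + c (σ l) = b' (σ l) := by
            intro l hl
            rw [Finset.mem_filter] at hl
            have hne : σ l ≠ σ i := by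
              intro hEq
              exact absurd (σ.injective hEq) (ne_of_gt hl.2)
            have hb : b (σ l) = b' (σ l) := by simp [hbdef, hne]
            have := hle (σ l)
            simp only [hb''def]
            omega
          have hsum : (∑ l ∈ Finset.univ.filter fun l : Fin n => i < l, b'' (σ l))
              + (∑ l ∈ Finset.univ.filter fun l : Fin n => i < l, c (σ l))
              = (∑ l ∈ Finset.univ.filter fun l : Fin n => i < l, b' (σ l)) := by
            rw [← Finset.sum_add_distrib]
            exact Finset.sum_congr rfl heq
          have hcl : 1 ≤ ∑ l ∈ Finset.univ.filter fun l : Fin n => i < l, c (σ l) := by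
            calc 1 ≤ c (σ l') := hl'pos
              _ ≤ ∑ l ∈ Finset.univ.filter fun l : Fin n => i < l, c (σ l) := by
                apply Finset.single_le_sum (f := fun l => c (σ l)) (fun l _ => Nat.zero_le _)
                simp [hl'i]
          omega
        have hNlt : (i : ℕ) * (r + 1)
            + (∑ l ∈ Finset.univ.filter fun l : Fin n => i < l, b'' (σ l)) < N := by
          omega
        rw [hfun, ih _ hNlt i b'' hb''sum (le_refl _)]
        ring
      · rw [hneg b c i hle]; ring
    rw [Finset.sum_eq_single_of_mem c₀ hc₀mem hinner] at E
    have hfun0 : (fun l => (b l : ℤ) - (c₀ l : ℤ)) = fun l => ((b' l : ℤ)) := by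
      funext l
      rw [hbdef, hc₀def]
      by_cases h : l = σ i <;> simp [h]
    rw [hfun0, muC_single] at E
    simpa using E
  intro b' hb' i
  exact key ((i : ℕ) * (r + 1)
    + (∑ l ∈ Finset.univ.filter fun l : Fin n => i < l, b' (σ l))) i b' hb' (le_refl _)
end

section
/- Let F be a field, A a unital associative F-algebra, and v ∈ A. Let λ ∈ F be nonzero and r ∈ ℕ. Then for every a ∈ A_∞(v) there exist x ∈ A and u ∈ Algebra.adjoin F {v} such that λ · (u * ad_v^r(x) − ad_v^r(x) * u) = a. In particular, A_∞(v) is contained in the image of the admissible partially commutative polynomial λ[U,[V,X_1]_r] in one noncommuting variable. -/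
/-- The inner derivation `ad_v : x ↦ v*x - x*v`. -/
def adE {A : Type*} [Ring A] (v : A) : A → A := fun x => v * x - x * v

lemma adE_smul {F : Type*} [Field F] {A : Type*} [Ring A] [Algebra F A]
    (v : A) (c : F) (x : A) : adE v (c • x) = c • adE v x := by
  simp [adE, mul_smul_comm, smul_mul_assoc, smul_sub]

lemma adE_iterate_smul {F : Type*} [Field F] {A : Type*} [Ring A] [Algebra F A]
    (v : A) (c : F) (x : A) (n : ℕ) :
    (adE v)^[n] (c • x) = c • (adE v)^[n] x := by
  induction n with
  | zero => simp
  | succ n ih => simp [Function.iterate_succ_apply', ih, adE_smul]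

/-- Lemma 4.1 (base case): `A_∞(v)` is contained in the image of the admissible
partially commutative polynomial `λ [U, [V, X_1]_r]` in one noncommuting
variable. -/
theorem stmt_12 (F : Type*) [Field F] (A : Type*) [Ring A] [Algebra F A]
    (v : A) (lam : F) (hlam : lam ≠ 0) (r : ℕ)
    (a : A) (ha : ∀ k : ℕ, 1 ≤ k → ∃ x : A, (adE v)^[k] x = a) :
    ∃ (x : A) (u : A), u ∈ Algebra.adjoin F {v} ∧
      lam • (u * (adE v)^[r] x - (adE v)^[r] x * u) = a := by
  obtain ⟨x₀, hx₀⟩ := ha (r + 1) (by omega)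
  refine ⟨lam⁻¹ • x₀, v, Algebra.subset_adjoin rfl, ?_⟩
  have h : v * (adE v)^[r] (lam⁻¹ • x₀) - (adE v)^[r] (lam⁻¹ • x₀) * v
      = (adE v)^[r + 1] (lam⁻¹ • x₀) := by
    rw [Function.iterate_succ_apply']; rfl
  rw [h, adE_iterate_smul, hx₀, smul_smul, mul_inv_cancel₀ hlam, one_smul]
end

section
/- Let F be a field, A a unital associative F-algebra, v ∈ A, n ≥ 2, r ∈ ℕ, and k ∈ {0,1,…,r}. Suppose there exists z ∈ A with ad_v^k(z) = 1. Let λ : S_{n−1} × {1,…,n} × B_r → F be scalars such that λ_{σ,j,b} = 0 whenever b_n < k (here b ∈ B_r ⊆ (Fin n → ℕ) and b_n is its last coordinate). Define f(x_1,…,x_n) = Σ_{σ ∈ S_{n−1}} Σ_{j=1}^n Σ_{b ∈ B_r} λ_{σ,j,b} · (∏_{l=1}^{j−1} ad_v^{b_{σ(l)}}(x_{σ(l)})) · ad_v^{b_n}(x_n) · (∏_{l=j}^{n−1} ad_v^{b_{σ(l)}}(x_{σ(l)})) and g(x_1,…,x_{n−1}; u) = Σ_{σ ∈ S_{n−1}}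 Σ_{j=1}^n Σ_{b ∈ B_r, b_n = k} λ_{σ,j,b} · (∏_{l=1}^{j−1} ad_v^{b_{σ(l)}}(x_{σ(l)})) · u · (∏_{l=j}^{n−1} ad_v^{b_{σ(l)}}(x_{σ(l)})). Then for all x_1,…,x_{n−1} ∈ A and all u ∈ Algebra.adjoin F {v}, g(x_1,…,x_{n−1}; u) = f(x_1,…,x_{n−1}, z*u). Consequently { g(x_1,…,x_{n−1}; u) : x_i ∈ A, u ∈ Algebra.adjoin F {v} } ⊆ { f(x_1,…,x_n) : x_i ∈ A }. -/
/-- The evaluation of the polynomial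
`f = Σ_{σ ∈ S_{n-1}} Σ_{j=1}^n Σ_{b ∈ B_r} λ_{σ,j,b}
  (X_{σ(1)} ⋯ X_{σ(j-1)} X_n X_{σ(j)} ⋯ X_{σ(n-1)})^b`
at `x_1, …, x_{n-1}, y`, where `n = m + 1`. -/
noncomputable def fPoly {F : Type*} [Field F] {A : Type*} [Ring A] [Algebra F A]
    (v : A) (m r : ℕ)
    (lam : Equiv.Perm (Fin m) → Fin (m + 1) → (Fin (m + 1) → ℕ) → F)
    (x : Fin m → A) (y : A) : A :=
  ∑ σ : Equiv.Perm (Fin m), ∑ j : Fin (m + 1),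
    ∑ b ∈ Finset.Nat.antidiagonalTuple (m + 1) r,
      lam σ j b •
        (((List.ofFn fun l : Fin m =>
            (adE v)^[b (σ l).castSucc] (x (σ l))).take j.val).prod *
          (adE v)^[b (Fin.last m)] y *
          ((List.ofFn fun l : Fin m =>
            (adE v)^[b (σ l).castSucc] (x (σ l))).drop j.val).prod)

/-- The evaluation of the polynomial
`g = Σ_{σ ∈ S_{n-1}} Σ_{j=1}^n Σ_{b ∈ B_r, b_n = k} λ_{σ,j,b}
  (X_{σ(1)} ⋯ X_{σ(j-1)})^b U (X_{σ(j)} ⋯ X_{σ(n-1)})^b`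
at `x_1, …, x_{n-1}` and `u`, where `n = m + 1`. -/
noncomputable def gPoly {F : Type*} [Field F] {A : Type*} [Ring A] [Algebra F A]
    (v : A) (m r k : ℕ)
    (lam : Equiv.Perm (Fin m) → Fin (m + 1) → (Fin (m + 1) → ℕ) → F)
    (x : Fin m → A) (u : A) : A :=
  ∑ σ : Equiv.Perm (Fin m), ∑ j : Fin (m + 1),
    ∑ b ∈ (Finset.Nat.antidiagonalTuple (m + 1) r).filter
        (fun b => b (Fin.last m) = k),
      lam σ j b •
        (((List.ofFn fun l : Fin m =>
            (adE v)^[b (σ l).castSucc] (x (σ l))).take j.val).prod *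
          u *
          ((List.ofFn fun l : Fin m =>
            (adE v)^[b (σ l).castSucc] (x (σ l))).drop j.val).prod)

/-- Lemma 4.2: if `ad_v^k(z) = 1` and `λ_{σ,j,b} = 0` whenever `b_n < k`, then
`g(x_1,…,x_{n-1}; u) = f(x_1,…,x_{n-1}, z*u)` for all `x_i ∈ A` and
`u ∈ F[v]`; consequently the image of `g` is contained in the image of `f`. -/
theorem stmt_13 (F : Type*) [Field F] (A : Type*) [Ring A] [Algebra F A]
    (v : A) (m : ℕ) (hm : 1 ≤ m) (r k : ℕ) (hkr : k ≤ r)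
    (z : A) (hz : (adE v)^[k] z = 1)
    (lam : Equiv.Perm (Fin m) → Fin (m + 1) → (Fin (m + 1) → ℕ) → F)
    (hlam : ∀ σ j b, b ∈ Finset.Nat.antidiagonalTuple (m + 1) r →
      b (Fin.last m) < k → lam σ j b = 0) :
    (∀ (x : Fin m → A) (u : A), u ∈ Algebra.adjoin F {v} →
      gPoly v m r k lam x u = fPoly v m r lam x (z * u)) ∧
    {w : A | ∃ (x : Fin m → A) (u : A), u ∈ Algebra.adjoin F {v} ∧
        gPoly v m r k lam x u = w} ⊆
      {w : A | ∃ (x : Fin m → A) (y : A), fPoly v m r lam x y = w} := by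
  have key : ∀ (x : Fin m → A) (u : A), u ∈ Algebra.adjoin F {v} →
      gPoly v m r k lam x u = fPoly v m r lam x (z * u) := by
    intro x u hu
    have hcomm : Commute v u := by
      induction hu using Algebra.adjoin_induction with
      | mem a ha => rw [Set.mem_singleton_iff.mp ha]
      | algebraMap f => exact (Algebra.commutes f v).symm
      | add a b _ _ ha hb => exact ha.add_right hb
      | mul a b _ _ ha hb => exact ha.mul_right hb
    have hmul : ∀ (n : ℕ) (a : A), (adE v)^[n] (a * u) = (adE v)^[n] a * u := by
      intro n
      induction n with
      | zero => intro a; simp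
      | succ n ih =>
        intro a
        rw [Function.iterate_succ_apply, Function.iterate_succ_apply, ← ih]
        congr 1
        simp only [adE, sub_mul, mul_assoc]
        rw [hcomm.eq]
    have hzero : ∀ n : ℕ, 0 < n → (adE v)^[n] (1 : A) = 0 := by
      intro n hn
      obtain ⟨n, rfl⟩ := Nat.exists_eq_succ_of_ne_zero hn.ne'
      rw [Function.iterate_succ_apply]
      have h1 : adE v (1 : A) = 0 := by simp [adE]
      rw [h1]
      exact Function.iterate_fixed (by simp [adE]) n
    have hzu : ∀ n : ℕ, (adE v)^[n] (z * u) = (adE v)^[n] z * u := fun n => hmul n z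
    have hzk : ∀ n : ℕ, k < n → (adE v)^[n] z = 0 := by
      intro n hn
      have : (adE v)^[(n - k) + k] z = 0 := by
        rw [Function.iterate_add_apply, hz]
        exact hzero _ (Nat.sub_pos_of_lt hn)
      rwa [Nat.sub_add_cancel hn.le] at this
    unfold gPoly fPoly
    refine Finset.sum_congr rfl fun σ _ => Finset.sum_congr rfl fun j _ => ?_
    rw [← Finset.sum_filter_add_sum_filter_not (Finset.Nat.antidiagonalTuple (m + 1) r)
      (fun b => b (Fin.last m) = k)]
    have h2 : ∑ b ∈ (Finset.Nat.antidiagonalTuple (m + 1) r).filter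
        (fun b => ¬ b (Fin.last m) = k),
        lam σ j b • (((List.ofFn fun l : Fin m =>
            (adE v)^[b (σ l).castSucc] (x (σ l))).take j.val).prod *
          (adE v)^[b (Fin.last m)] (z * u) *
          ((List.ofFn fun l : Fin m =>
            (adE v)^[b (σ l).castSucc] (x (σ l))).drop j.val).prod) = 0 := by
      refine Finset.sum_eq_zero fun b hb => ?_
      simp only [Finset.mem_filter] at hb
      rcases lt_or_gt_of_ne hb.2 with h | h
      · rw [hlam σ j b hb.1 h, zero_smul]
      · rw [hzu, hzk _ h, zero_mul, mul_zero, zero_mul, smul_zero]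
    rw [h2, add_zero]
    refine Finset.sum_congr rfl fun b hb => ?_
    simp only [Finset.mem_filter] at hb
    rw [hzu, hb.2, hz, one_mul]
  refine ⟨key, ?_⟩
  rintro w ⟨x, u, hu, hg⟩
  exact ⟨x, z * u, by rw [← key x u hu, hg]⟩
end

section
/- Let F be a field, A a unital associative F-algebra, and v ∈ A such that for every k ≥ 1 there exists z ∈ A with ad_v^k(z) = 1. Let n ≥ 2 and suppose that for every r' ∈ ℕ and every family of scalars that is not identically zero defining an admissible polynomial in n−1 noncommuting variables — that is, for every not-all-zero λ' : S_{n−1} × B'_{r'} → F (type one) and for every not-all-zero λ'' : S_{n−1} × B'_{r'} × {1,…,n−1} → F (type two) — the set A_∞(v) is contained in the corresponding image: every a ∈ A_∞(v) equals Σ_{σ,b} λ'_{σ,b} ∏_{j=1}^{n−1} ad_v^{b_{σ(j)}}(x_{σ(j)}) for some x ∈ A^{n−1}, respectively equals Σ_{σ,b,i} λ''_{σ,b,i} ∏_{j=1}^{n−1} w_j where w_j = ad_v^{b_{σ(j)}}(x_{σ(j)}) for j ≠ i and w_i = u*ad_v^{b_{σ(i)}}(x_{σ(i)}) − ad_v^{b_{σ(i)}}(x_{σ(i)})*u,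 for some x ∈ A^{n−1} and u ∈ Algebra.adjoin F {v}. Then for every r ∈ ℕ and every not-all-zero λ : S_n × B_r → F, every a ∈ A_∞(v) can be written as a = Σ_{σ ∈ S_n} Σ_{b ∈ B_r} λ_{σ,b} ∏_{j=1}^n ad_v^{b_{σ(j)}}(x_{σ(j)}) for some x_1,…,x_n ∈ A. -/
section AdBasics
variable {A : Type*} [Ring A]

lemma adE_zero (v : A) : adE v 0 = 0 := by simp [adE]

lemma adE_iter_zero (v : A) (k : ℕ) : (adE v)^[k] 0 = 0 := by
  induction k with
  | zero => rfl
  | succ n ih => rw [Function.iterate_succ_apply, adE_zero, ih]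

lemma adE_comm_eq_zero {v u : A} (h : v * u = u * v) : adE v u = 0 := by
  simp [adE, h]

lemma adE_iter_comm {v u : A} (h : v * u = u * v) {k : ℕ} (hk : 1 ≤ k) :
    (adE v)^[k] u = 0 := by
  obtain ⟨n, rfl⟩ := Nat.exists_eq_add_of_le hk
  rw [add_comm, Function.iterate_succ_apply, adE_comm_eq_zero h, adE_iter_zero]

lemma adE_iter_one (v : A) {k : ℕ} (hk : 1 ≤ k) : (adE v)^[k] (1 : A) = 0 :=
  adE_iter_comm (by rw [mul_one, one_mul]) hk

lemma adE_mul_left {v u : A} (h : v * u = u * v) (t : A) :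
    adE v (u * t) = u * adE v t := by
  simp only [adE, mul_sub, ← mul_assoc, h]

lemma adE_iter_mul_left {v u : A} (h : v * u = u * v) (k : ℕ) (t : A) :
    (adE v)^[k] (u * t) = u * (adE v)^[k] t := by
  induction k generalizing t with
  | zero => rfl
  | succ n ih => rw [Function.iterate_succ_apply, adE_mul_left h,
      Function.iterate_succ_apply, ih]

end AdBasics

section InsPerm
variable {m : ℕ}

def insPerm (i : Fin (m + 1)) (τ : Equiv.Perm (Fin m)) : Equiv.Perm (Fin (m + 1)) :=
  (finSuccEquiv' i).trans ((Equiv.optionCongr τ).trans (finSuccEquiv' (Fin.last m)).symm)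

lemma insPerm_self (i : Fin (m + 1)) (τ : Equiv.Perm (Fin m)) :
    insPerm i τ i = Fin.last m := by
  simp [insPerm, finSuccEquiv'_at, finSuccEquiv'_symm_none]

lemma insPerm_succAbove (i : Fin (m + 1)) (τ : Equiv.Perm (Fin m)) (j : Fin m) :
    insPerm i τ (i.succAbove j) = Fin.castSucc (τ j) := by
  simp [insPerm, finSuccEquiv'_succAbove, finSuccEquiv'_symm_some, Fin.succAbove_last]

lemma insPerm_bijective :
    Function.Bijective (fun p : Fin (m + 1) × Equiv.Perm (Fin m) => insPerm p.1 p.2) := by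
  rw [Fintype.bijective_iff_injective_and_card]
  constructor
  · rintro ⟨i, τ⟩ ⟨i', τ'⟩ h
    simp only at h
    have hi : i = i' := by
      by_contra hne
      obtain ⟨j, hj⟩ := Fin.exists_succAbove_eq hne
      have h1 : insPerm i τ i = Fin.last m := insPerm_self i τ
      have h2 : insPerm i' τ' i = Fin.castSucc (τ' j) := by
        rw [← hj, insPerm_succAbove]
      rw [h] at h1
      rw [h1] at h2
      exact absurd h2.symm (Fin.castSucc_lt_last (τ' j)).ne
    subst hi
    have hτ : τ = τ' := by
      apply Equiv.ext
      intro j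
      have := congrArg (fun σ : Equiv.Perm (Fin (m+1)) => σ (i.succAbove j)) h
      simp only [insPerm_succAbove] at this
      exact Fin.castSucc_injective m this
    rw [hτ]
  · simp [Fintype.card_perm, Nat.factorial_succ]

end InsPerm

section ListLemmas
variable {α : Type*}

lemma ofFn_eq_insert {M : ℕ} (Y : Fin M → α) (u : α) (i : Fin (M + 1))
    (g : Fin (M + 1) → α) (hg1 : g i = u) (hg2 : ∀ j : Fin M, g (i.succAbove j) = Y j) :
    List.ofFn g = (List.ofFn Y).take i.val ++ u :: (List.ofFn Y).drop i.val := by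
  have hil : i.val ≤ M := Fin.is_le i
  apply List.ext_getElem
  · simp only [List.length_ofFn, List.length_append, List.length_take, List.length_cons,
      List.length_drop]
    omega
  · intro k hk1 hk2
    simp only [List.length_ofFn] at hk1
    rw [List.getElem_ofFn]
    rcases lt_trichotomy k i.val with hk | hk | hk
    · have hkM : k < M := by omega
      have he : (⟨k, hk1⟩ : Fin (M + 1)) = i.succAbove ⟨k, hkM⟩ := by
        rw [Fin.succAbove_of_castSucc_lt]
        · rfl
        · exact hk
      rw [he, hg2]
      rw [List.getElem_append_left (by simp; omega)]
      rw [List.getElem_take, List.getElem_ofFn]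
    · have he : (⟨k, hk1⟩ : Fin (M + 1)) = i := Fin.ext hk
      rw [he, hg1]
      rw [List.getElem_append_right (by simp; omega)]
      simp only [List.length_take, List.length_ofFn,
        show k - min i.val M = 0 by omega, List.getElem_cons_zero]
    · have hkM : k - 1 < M := by omega
      have he : (⟨k, hk1⟩ : Fin (M + 1)) = i.succAbove ⟨k - 1, hkM⟩ := by
        rw [Fin.succAbove_of_le_castSucc]
        · apply Fin.ext
          simp only [Fin.val_succ, Fin.val_mk]
          omega
        · simp only [Fin.le_def, Fin.coe_castSucc, Fin.val_mk]
          omega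
      rw [he, hg2]
      rw [List.getElem_append_right (by simp; omega)]
      simp only [List.length_take, List.length_ofFn,
        show k - min i.val M = (k - i.val - 1) + 1 by omega, List.getElem_cons_succ]
      rw [List.getElem_drop, List.getElem_ofFn]
      exact congrArg Y (Fin.ext (by simp only [Fin.val_mk]; omega))

lemma ofFn_ite_eq {M : ℕ} (Y : Fin M → α) (w : α) (j : Fin M) :
    List.ofFn (fun j' => if j' = j then w else Y j')
      = (List.ofFn Y).take j.val ++ w :: (List.ofFn Y).drop (j.val + 1) := by
  have hjM := j.isLt
  apply List.ext_getElem
  · simp only [List.length_ofFn, List.length_append, List.length_take, List.length_cons,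
      List.length_drop]
    omega
  · intro k hk1 hk2
    simp only [List.length_ofFn] at hk1
    rw [List.getElem_ofFn]
    rcases lt_trichotomy k j.val with hk | hk | hk
    · rw [if_neg (by simp only [Fin.ext_iff, Fin.val_mk]; omega)]
      rw [List.getElem_append_left (by simp; omega)]
      rw [List.getElem_take, List.getElem_ofFn]
    · rw [if_pos (Fin.ext hk)]
      rw [List.getElem_append_right (by simp; omega)]
      simp only [List.length_take, List.length_ofFn,
        show k - min j.val M = 0 by omega, List.getElem_cons_zero]
    · rw [if_neg (by simp only [Fin.ext_iff, Fin.val_mk]; omega)]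
      rw [List.getElem_append_right (by simp; omega)]
      simp only [List.length_take, List.length_ofFn,
        show k - min j.val M = (k - j.val - 1) + 1 by omega, List.getElem_cons_succ]
      rw [List.getElem_drop, List.getElem_ofFn]
      exact congrArg Y (Fin.ext (by simp only [Fin.val_mk]; omega))

end ListLemmas

section Tel
variable {F : Type*} [Field F] {A : Type*} [Ring A] [Algebra F A]

lemma insert_prod_eq {M : ℕ} (y : Fin M → A) (u : A) :
    ∀ k : ℕ, k ≤ M →
      ((List.ofFn y).take k).prod * u * ((List.ofFn y).drop k).prod
        = u * (List.ofFn y).prod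
          - ∑ j : Fin M, if j.val < k then
              ((List.ofFn y).take j.val).prod * (u * y j - y j * u) *
                ((List.ofFn y).drop (j.val + 1)).prod
            else 0 := by
  intro k
  induction k with
  | zero => intro _; simp
  | succ n ih =>
    intro hn
    have hnM : n < M := hn
    have hdrop : (List.ofFn y).drop n = y ⟨n, hnM⟩ :: (List.ofFn y).drop (n + 1) := by
      rw [List.drop_eq_getElem_cons (by simp [hnM]), List.getElem_ofFn]
    have htake : (List.ofFn y).take (n + 1) = (List.ofFn y).take n ++ [y ⟨n, hnM⟩] := by
      rw [List.take_succ]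
      congr 1
      rw [List.getElem?_eq_getElem (by simp [hnM]), List.getElem_ofFn]
      rfl
    have key := ih (Nat.le_of_lt hnM)
    have h1 : ((List.ofFn y).take (n + 1)).prod * u * ((List.ofFn y).drop (n + 1)).prod
        = ((List.ofFn y).take n).prod * u * ((List.ofFn y).drop n).prod
          - ((List.ofFn y).take n).prod * (u * y ⟨n, hnM⟩ - y ⟨n, hnM⟩ * u) *
              ((List.ofFn y).drop (n + 1)).prod := by
      rw [htake]
      conv_rhs => rw [hdrop]
      simp only [List.prod_append, List.prod_cons, List.prod_singleton]
      noncomm_ring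
      simp only [List.prod_nil, one_mul, neg_smul, one_smul]
    have hsplit : (∑ j : Fin M, if j.val < n + 1 then
          ((List.ofFn y).take j.val).prod * (u * y j - y j * u) *
            ((List.ofFn y).drop (j.val + 1)).prod else 0)
        = (∑ j : Fin M, if j.val < n then
            ((List.ofFn y).take j.val).prod * (u * y j - y j * u) *
              ((List.ofFn y).drop (j.val + 1)).prod else 0)
          + ((List.ofFn y).take n).prod * (u * y ⟨n, hnM⟩ - y ⟨n, hnM⟩ * u) *
              ((List.ofFn y).drop (n + 1)).prod := by
      have e2 : ((List.ofFn y).take n).prod * (u * y ⟨n, hnM⟩ - y ⟨n, hnM⟩ * u) *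
              ((List.ofFn y).drop (n + 1)).prod
          = ∑ j : Fin M, if j = ⟨n, hnM⟩ then
              ((List.ofFn y).take j.val).prod * (u * y j - y j * u) *
                ((List.ofFn y).drop (j.val + 1)).prod else 0 := by
        rw [Finset.sum_ite_eq' Finset.univ (⟨n, hnM⟩ : Fin M)]
        simp
      rw [e2, ← Finset.sum_add_distrib]
      apply Finset.sum_congr rfl
      intro j _
      rcases eq_or_ne j ⟨n, hnM⟩ with rfl | hne
      · simp
      · have hvn : j.val ≠ n := fun h => hne (Fin.ext h)
        by_cases hj : j.val < n
        · have h1 : j.val < n + 1 := by omega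
          simp [h1, hj, hne]
        · have h1 : ¬ j.val < n + 1 := by omega
          simp [h1, hj, hne]
    rw [h1, key, hsplit]
    abel

end Tel

lemma tel_sum {F : Type*} [Field F] {A : Type*} [Ring A] [Algebra F A]
    {M : ℕ} (y : Fin M → A) (u : A) (c : Fin (M + 1) → F) :
    ∑ i : Fin (M + 1), c i •
        (((List.ofFn y).take i.val).prod * u * ((List.ofFn y).drop i.val).prod)
      = (∑ i : Fin (M + 1), c i) • (u * (List.ofFn y).prod)
        - ∑ j : Fin M, (∑ i : Fin (M + 1), if j.castSucc < i then c i else 0) •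
            (((List.ofFn y).take j.val).prod * (u * y j - y j * u) *
              ((List.ofFn y).drop (j.val + 1)).prod) := by
  have h1 : ∀ i : Fin (M + 1), c i •
      (((List.ofFn y).take i.val).prod * u * ((List.ofFn y).drop i.val).prod)
      = c i • (u * (List.ofFn y).prod)
        - ∑ j : Fin M, if j.castSucc < i then c i •
            (((List.ofFn y).take j.val).prod * (u * y j - y j * u) *
              ((List.ofFn y).drop (j.val + 1)).prod) else 0 := by
    intro i
    rw [insert_prod_eq y u i.val i.is_le, smul_sub, Finset.smul_sum]
    congr 1
    apply Finset.sum_congr rfl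
    intro j _
    rw [smul_ite, smul_zero]
    congr 1
  rw [Finset.sum_congr rfl fun i _ => h1 i, Finset.sum_sub_distrib, ← Finset.sum_smul,
    Finset.sum_comm]
  congr 1
  apply Finset.sum_congr rfl
  intro j _
  rw [Finset.sum_smul]
  apply Finset.sum_congr rfl
  intro i _
  rw [ite_smul, zero_smul]

section MainEval
variable {F : Type*} [Field F] {A : Type*} [Ring A] [Algebra F A]

lemma snoc_mem_antidiagonalTuple {m r : ℕ} {b' : Fin m → ℕ}
    (hb' : b' ∈ Finset.Nat.antidiagonalTuple m r) :
    (Fin.snoc b' 0 : Fin (m + 1) → ℕ) ∈ Finset.Nat.antidiagonalTuple (m + 1) r := by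
  rw [Finset.Nat.mem_antidiagonalTuple] at hb' ⊢
  rw [Fin.sum_univ_castSucc]
  simp [Fin.snoc_castSucc, Fin.snoc_last, hb']

lemma prod_snoc_eq (v : A) {m : ℕ} (x : Fin m → A) (u : A) (b' : Fin m → ℕ)
    (i : Fin (m + 1)) (τ : Equiv.Perm (Fin m)) :
    (List.ofFn fun j => (adE v)^[(Fin.snoc b' 0 : Fin (m + 1) → ℕ) ((insPerm i τ) j)]
        ((Fin.snoc x u : Fin (m + 1) → A) ((insPerm i τ) j))).prod
      = ((List.ofFn fun j => (adE v)^[b' (τ j)] (x (τ j))).take i.val).prod * u *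
          ((List.ofFn fun j => (adE v)^[b' (τ j)] (x (τ j))).drop i.val).prod := by
  rw [ofFn_eq_insert (fun j => (adE v)^[b' (τ j)] (x (τ j))) u i _ ?_ ?_]
  · rw [List.prod_append, List.prod_cons, mul_assoc]
  · rw [insPerm_self]
    simp [Fin.snoc_last]
  · intro j
    rw [insPerm_succAbove]
    simp [Fin.snoc_castSucc]

lemma innerSumEval (v : A) {m r : ℕ} (L : (Fin (m + 1) → ℕ) → F) (x : Fin m → A) (u : A)
    (hu : v * u = u * v) (i : Fin (m + 1)) (τ : Equiv.Perm (Fin m)) :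
    ∑ b ∈ Finset.Nat.antidiagonalTuple (m + 1) r,
        L b • (List.ofFn fun j => (adE v)^[b ((insPerm i τ) j)]
          ((Fin.snoc x u : Fin (m + 1) → A) ((insPerm i τ) j))).prod
      = ∑ b' ∈ Finset.Nat.antidiagonalTuple m r,
          L (Fin.snoc b' 0) •
            (((List.ofFn fun j => (adE v)^[b' (τ j)] (x (τ j))).take i.val).prod * u *
              ((List.ofFn fun j => (adE v)^[b' (τ j)] (x (τ j))).drop i.val).prod) := by
  rw [← Finset.sum_filter_add_sum_filter_not _ (fun b => b (Fin.last m) = 0)]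
  have hz : ∑ b ∈ (Finset.Nat.antidiagonalTuple (m + 1) r).filter
      (fun b => ¬ b (Fin.last m) = 0),
      L b • (List.ofFn fun j => (adE v)^[b ((insPerm i τ) j)]
        ((Fin.snoc x u : Fin (m + 1) → A) ((insPerm i τ) j))).prod = 0 := by
    apply Finset.sum_eq_zero
    intro b hb
    rw [Finset.mem_filter] at hb
    have h0 : (List.ofFn fun j => (adE v)^[b ((insPerm i τ) j)]
        ((Fin.snoc x u : Fin (m + 1) → A) ((insPerm i τ) j))).prod = 0 := by
      apply List.prod_eq_zero
      rw [List.mem_ofFn]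
      refine ⟨i, ?_⟩
      simp only [insPerm_self, Fin.snoc_last]
      exact adE_iter_comm hu (by omega)
    rw [h0, smul_zero]
  rw [hz, add_zero]
  refine Finset.sum_nbij' (fun b => Fin.init b) (fun b' => Fin.snoc b' 0) ?_ ?_ ?_ ?_ ?_
  · intro b hb
    rw [Finset.mem_filter] at hb
    rw [Finset.Nat.mem_antidiagonalTuple] at hb ⊢
    have := hb.1
    rw [Fin.sum_univ_castSucc, hb.2, add_zero] at this
    exact this
  · intro b' hb'
    rw [Finset.mem_filter]
    exact ⟨snoc_mem_antidiagonalTuple hb', by simp [Fin.snoc_last]⟩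
  · intro b hb
    rw [Finset.mem_filter] at hb
    have h2 : b (Fin.last m) = 0 := hb.2
    conv_rhs => rw [← Fin.snoc_init_self b]
    rw [h2]
  · intro b' _
    exact Fin.init_snoc ..
  · intro b hb
    rw [Finset.mem_filter] at hb
    have hb2 : (Fin.snoc (Fin.init b) 0 : Fin (m + 1) → ℕ) = b := by
      conv_rhs => rw [← Fin.snoc_init_self b]
      rw [hb.2]
    rw [← prod_snoc_eq v x u (Fin.init b) i τ, hb2]
end MainEval

lemma main_eval {F : Type*} [Field F] {A : Type*} [Ring A] [Algebra F A]
    (v : A) {m r : ℕ}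
    (lam : Equiv.Perm (Fin (m + 1)) → (Fin (m + 1) → ℕ) → F)
    (x : Fin m → A) (u : A) (hu : v * u = u * v) :
    ∑ σ : Equiv.Perm (Fin (m + 1)), ∑ b ∈ Finset.Nat.antidiagonalTuple (m + 1) r,
        lam σ b • (List.ofFn fun j => (adE v)^[b (σ j)]
          ((Fin.snoc x u : Fin (m + 1) → A) (σ j))).prod
      = ∑ τ : Equiv.Perm (Fin m), ∑ b' ∈ Finset.Nat.antidiagonalTuple m r,
          ((∑ i : Fin (m + 1), lam (insPerm i τ) (Fin.snoc b' 0)) •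
              (u * (List.ofFn fun j => (adE v)^[b' (τ j)] (x (τ j))).prod)
            - ∑ j : Fin m, (∑ i : Fin (m + 1),
                  if j.castSucc < i then lam (insPerm i τ) (Fin.snoc b' 0) else 0) •
                (((List.ofFn fun j' => (adE v)^[b' (τ j')] (x (τ j'))).take j.val).prod *
                  (u * (adE v)^[b' (τ j)] (x (τ j)) - (adE v)^[b' (τ j)] (x (τ j)) * u) *
                  ((List.ofFn fun j' => (adE v)^[b' (τ j')] (x (τ j'))).drop (j.val + 1)).prod)) := by
  have h0 := Fintype.sum_bijective (fun p : Fin (m + 1) × Equiv.Perm (Fin m) => insPerm p.1 p.2)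
    insPerm_bijective
    (fun p => ∑ b ∈ Finset.Nat.antidiagonalTuple (m + 1) r,
      lam (insPerm p.1 p.2) b • (List.ofFn fun j => (adE v)^[b ((insPerm p.1 p.2) j)]
        ((Fin.snoc x u : Fin (m + 1) → A) ((insPerm p.1 p.2) j))).prod)
    (fun σ => ∑ b ∈ Finset.Nat.antidiagonalTuple (m + 1) r,
      lam σ b • (List.ofFn fun j => (adE v)^[b (σ j)]
        ((Fin.snoc x u : Fin (m + 1) → A) (σ j))).prod)
    (fun p => rfl)
  rw [← h0, Fintype.sum_prod_type]
  rw [Finset.sum_congr rfl (fun i (_ : i ∈ Finset.univ) => Finset.sum_congr rfl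
    (fun τ _ => innerSumEval v (lam (insPerm i τ)) x u hu i τ))]
  rw [Finset.sum_comm]
  apply Finset.sum_congr rfl
  intro τ _
  rw [Finset.sum_comm]
  apply Finset.sum_congr rfl
  intro b' _
  exact tel_sum (fun j => (adE v)^[b' (τ j)] (x (τ j))) u
    (fun i => lam (insPerm i τ) (Fin.snoc b' 0))

lemma all_zero_of_partial {F : Type*} [Field F] {M : ℕ} (c : Fin (M + 1) → F)
    (hS : ∑ i, c i = 0)
    (hmu : ∀ j : Fin M, (∑ i, if j.castSucc < i then c i else 0) = 0) :
    ∀ i, c i = 0 := by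
  have hnu : ∀ i0 : Fin (M + 1), (∑ i, if i0 ≤ i then c i else 0) = 0 := by
    intro i0
    induction i0 using Fin.cases with
    | zero => simpa [Fin.zero_le] using hS
    | succ j =>
      refine (Finset.sum_congr rfl fun i _ => ?_).trans (hmu j)
      simp only [Fin.castSucc_lt_iff_succ_le]
  have hzero : ∀ i0 : Fin (M + 1), ∀ i, i0 ≤ i → c i = 0 := by
    intro i0
    induction i0 using Fin.reverseInduction with
    | last =>
      intro i hi
      have hi' : i = Fin.last M := Fin.last_le_iff.mp hi
      subst hi'
      have h := hnu (Fin.last M)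
      rw [Finset.sum_eq_single (Fin.last M)] at h
      · simpa using h
      · intro b _ hb
        rw [if_neg fun hle => hb (Fin.last_le_iff.mp hle)]
      · simp
    | cast j IH =>
      intro i hi
      rcases eq_or_lt_of_le hi with heq | hlt
      · subst heq
        have h := hnu (Fin.castSucc j)
        rw [Finset.sum_eq_single (Fin.castSucc j)] at h
        · simpa using h
        · intro b _ hb
          by_cases hle : Fin.castSucc j ≤ b
          · rw [if_pos hle]
            exact IH b (Fin.castSucc_lt_iff_succ_le.mp (lt_of_le_of_ne hle (Ne.symm hb)))
          · rw [if_neg hle]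
        · simp
      · exact IH i (Fin.castSucc_lt_iff_succ_le.mp hlt)
  exact fun i => hzero 0 i (Fin.zero_le i)


/-- Lemma 4.3 (induction step for type one): if `A_∞(v)` is contained in the
image of every nonzero admissible partially commutative polynomial in `n - 1`
noncommuting variables (of type one and of type two), then `A_∞(v)` is contained
in the image of every nonzero admissible polynomial of type one in `n`
noncommuting variables.  Here `n = m + 1 ≥ 2`. -/
theorem stmt_14 (F : Type*) [Field F] (A : Type*) [Ring A] [Algebra F A]
    (v : A) (hv : ∀ k : ℕ, 1 ≤ k → ∃ z : A, (adE v)^[k] z = 1)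
    (m : ℕ) (hm : 1 ≤ m)
    (ih1 : ∀ (r' : ℕ) (lam' : Equiv.Perm (Fin m) → (Fin m → ℕ) → F),
      (∃ σ, ∃ b ∈ Finset.Nat.antidiagonalTuple m r', lam' σ b ≠ 0) →
      ∀ a : A, (∀ k : ℕ, 1 ≤ k → ∃ x : A, (adE v)^[k] x = a) →
      ∃ x : Fin m → A,
        a = ∑ σ : Equiv.Perm (Fin m), ∑ b ∈ Finset.Nat.antidiagonalTuple m r',
          lam' σ b • (List.ofFn fun j => (adE v)^[b (σ j)] (x (σ j))).prod)
    (ih2 : ∀ (r' : ℕ) (lam'' : Equiv.Perm (Fin m) → (Fin m → ℕ) → Fin m → F),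
      (∃ σ, ∃ b ∈ Finset.Nat.antidiagonalTuple m r', ∃ i, lam'' σ b i ≠ 0) →
      ∀ a : A, (∀ k : ℕ, 1 ≤ k → ∃ x : A, (adE v)^[k] x = a) →
      ∃ (x : Fin m → A) (u : A), u ∈ Algebra.adjoin F {v} ∧
        a = ∑ σ : Equiv.Perm (Fin m), ∑ b ∈ Finset.Nat.antidiagonalTuple m r',
          ∑ i : Fin m, lam'' σ b i •
            (List.ofFn fun j =>
              if j = i then
                u * (adE v)^[b (σ j)] (x (σ j)) - (adE v)^[b (σ j)] (x (σ j)) * u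
              else (adE v)^[b (σ j)] (x (σ j))).prod)
    (r : ℕ) (lam : Equiv.Perm (Fin (m + 1)) → (Fin (m + 1) → ℕ) → F)
    (hlam : ∃ σ, ∃ b ∈ Finset.Nat.antidiagonalTuple (m + 1) r, lam σ b ≠ 0)
    (a : A) (ha : ∀ k : ℕ, 1 ≤ k → ∃ x : A, (adE v)^[k] x = a) :
    ∃ x : Fin (m + 1) → A,
      a = ∑ σ : Equiv.Perm (Fin (m + 1)),
        ∑ b ∈ Finset.Nat.antidiagonalTuple (m + 1) r,
          lam σ b • (List.ofFn fun j => (adE v)^[b (σ j)] (x (σ j))).prod := by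
  classical
  -- Step 1: the "AB" lemma: if some coefficient with last-exponent `0` is nonzero
  -- (in the `insPerm` coordinates), then `a` is represented with last variable in `F[v]`.
  have hAB : ∀ (ρ : ℕ) (L : Equiv.Perm (Fin (m + 1)) → (Fin (m + 1) → ℕ) → F),
      (∃ τ : Equiv.Perm (Fin m), ∃ b' ∈ Finset.Nat.antidiagonalTuple m ρ, ∃ i : Fin (m + 1),
        L (insPerm i τ) (Fin.snoc b' 0) ≠ 0) →
      ∃ (x : Fin m → A) (u : A), u ∈ Algebra.adjoin F {v} ∧
        a = ∑ σ : Equiv.Perm (Fin (m + 1)), ∑ b ∈ Finset.Nat.antidiagonalTuple (m + 1) ρ,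
          L σ b • (List.ofFn fun j => (adE v)^[b (σ j)]
            ((Fin.snoc x u : Fin (m + 1) → A) (σ j))).prod := by
    intro ρ L hLw
    by_cases hA : ∃ τ, ∃ b' ∈ Finset.Nat.antidiagonalTuple m ρ,
        (∑ i : Fin (m + 1), L (insPerm i τ) (Fin.snoc b' 0)) ≠ 0
    · obtain ⟨x, hx⟩ := ih1 ρ (fun τ b' => ∑ i : Fin (m + 1), L (insPerm i τ) (Fin.snoc b' 0))
        hA a ha
      refine ⟨x, 1, one_mem _, ?_⟩
      rw [main_eval v L x 1 (by rw [mul_one, one_mul]), hx]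
      apply Finset.sum_congr rfl; intro τ _
      apply Finset.sum_congr rfl; intro b' _
      simp only [one_mul, mul_one, sub_self, mul_zero, zero_mul, smul_zero,
        Finset.sum_const_zero, sub_zero]
    · push_neg at hA
      by_cases hB : ∃ τ, ∃ b' ∈ Finset.Nat.antidiagonalTuple m ρ, ∃ j : Fin m,
          (∑ i : Fin (m + 1), if j.castSucc < i then L (insPerm i τ) (Fin.snoc b' 0) else 0) ≠ 0
      · obtain ⟨τ0, b0, hb0, j0, hj0⟩ := hB
        obtain ⟨x, u, humem, hx⟩ := ih2 ρ
          (fun τ b' j => - ∑ i : Fin (m + 1),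
            if j.castSucc < i then L (insPerm i τ) (Fin.snoc b' 0) else 0)
          ⟨τ0, b0, hb0, j0, by simpa using hj0⟩ a ha
        have hcomm : v * u = u * v := Algebra.commute_of_mem_adjoin_self humem
        refine ⟨x, u, humem, ?_⟩
        rw [main_eval v L x u hcomm, hx]
        apply Finset.sum_congr rfl; intro τ _
        apply Finset.sum_congr rfl; intro b' hb'
        rw [hA τ b' hb', zero_smul, zero_sub, ← Finset.sum_neg_distrib]
        apply Finset.sum_congr rfl; intro j _
        have hconst : (List.ofFn fun j' =>
            if j' = j then
              u * (adE v)^[b' (τ j')] (x (τ j')) - (adE v)^[b' (τ j')] (x (τ j')) * u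
            else (adE v)^[b' (τ j')] (x (τ j')))
            = List.ofFn fun j' =>
              if j' = j then
                u * (adE v)^[b' (τ j)] (x (τ j)) - (adE v)^[b' (τ j)] (x (τ j)) * u
              else (adE v)^[b' (τ j')] (x (τ j')) := by
          congr 1
          funext j'
          by_cases h : j' = j
          · subst h; simp
          · simp [h]
        have hW : (List.ofFn fun j' =>
            if j' = j then
              u * (adE v)^[b' (τ j')] (x (τ j')) - (adE v)^[b' (τ j')] (x (τ j')) * u
            else (adE v)^[b' (τ j')] (x (τ j'))).prod
            = ((List.ofFn fun j' => (adE v)^[b' (τ j')] (x (τ j'))).take j.val).prod *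
                (u * (adE v)^[b' (τ j)] (x (τ j)) - (adE v)^[b' (τ j)] (x (τ j)) * u) *
                ((List.ofFn fun j' => (adE v)^[b' (τ j')] (x (τ j'))).drop (j.val + 1)).prod := by
          rw [hconst, ofFn_ite_eq, List.prod_append, List.prod_cons, ← mul_assoc]
        rw [hW, neg_smul]
      · exfalso
        push_neg at hB
        obtain ⟨τw, bw, hbw, iw, hcw⟩ := hLw
        exact hcw (all_zero_of_partial (fun i => L (insPerm i τw) (Fin.snoc bw 0))
          (hA τw bw hbw) (fun j => hB τw bw hbw j) iw)
  -- Step 2: the main induction on the degree `ρ`.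
  have key : ∀ (ρ : ℕ) (L : Equiv.Perm (Fin (m + 1)) → (Fin (m + 1) → ℕ) → F),
      (∃ σ, ∃ b ∈ Finset.Nat.antidiagonalTuple (m + 1) ρ, L σ b ≠ 0) → ∀ s : ℕ,
      ∃ (x : Fin (m + 1) → A) (y : A), (adE v)^[s] y = x (Fin.last m) ∧
        a = ∑ σ : Equiv.Perm (Fin (m + 1)), ∑ b ∈ Finset.Nat.antidiagonalTuple (m + 1) ρ,
          L σ b • (List.ofFn fun j => (adE v)^[b (σ j)] (x (σ j))).prod := by
    intro ρ
    induction ρ with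
    | zero =>
      intro L hL s
      have hc : ∃ τ : Equiv.Perm (Fin m), ∃ b' ∈ Finset.Nat.antidiagonalTuple m 0,
          ∃ i : Fin (m + 1), L (insPerm i τ) (Fin.snoc b' 0) ≠ 0 := by
        obtain ⟨σw, bw, hbw, hLw⟩ := hL
        have hbl : bw (Fin.last m) = 0 := by
          rw [Finset.Nat.mem_antidiagonalTuple] at hbw
          have := Finset.sum_eq_zero_iff.mp hbw (Fin.last m) (Finset.mem_univ _)
          exact this
        obtain ⟨p, hp0⟩ := insPerm_bijective.surjective σw
        have hp : insPerm p.1 p.2 = σw := hp0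
        refine ⟨p.2, Fin.init bw, ?_, p.1, ?_⟩
        · rw [Finset.Nat.mem_antidiagonalTuple] at hbw ⊢
          rw [Fin.sum_univ_castSucc, hbl, add_zero] at hbw
          exact hbw
        · have hsnoc : (Fin.snoc (Fin.init bw) 0 : Fin (m + 1) → ℕ) = bw := by
            conv_rhs => rw [← Fin.snoc_init_self bw]
            rw [hbl]
          rw [hsnoc, hp]
          exact hLw
      obtain ⟨x, u, humem, hrep⟩ := hAB 0 L hc
      have hcomm : v * u = u * v := Algebra.commute_of_mem_adjoin_self humem
      refine ⟨Fin.snoc x u, ?_⟩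
      rcases Nat.eq_zero_or_pos s with rfl | hs
      · exact ⟨u, by simp [Fin.snoc_last], hrep⟩
      · obtain ⟨z, hz⟩ := hv s hs
        refine ⟨u * z, ?_, hrep⟩
        rw [adE_iter_mul_left hcomm, hz, mul_one, Fin.snoc_last]
    | succ n IH =>
      intro L hL s
      by_cases hc : ∃ τ : Equiv.Perm (Fin m), ∃ b' ∈ Finset.Nat.antidiagonalTuple m (n + 1),
          ∃ i : Fin (m + 1), L (insPerm i τ) (Fin.snoc b' 0) ≠ 0
      · obtain ⟨x, u, humem, hrep⟩ := hAB (n + 1) L hc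
        have hcomm : v * u = u * v := Algebra.commute_of_mem_adjoin_self humem
        refine ⟨Fin.snoc x u, ?_⟩
        rcases Nat.eq_zero_or_pos s with rfl | hs
        · exact ⟨u, by simp [Fin.snoc_last], hrep⟩
        · obtain ⟨z, hz⟩ := hv s hs
          refine ⟨u * z, ?_, hrep⟩
          rw [adE_iter_mul_left hcomm, hz, mul_one, Fin.snoc_last]
      · push_neg at hc
        -- every coefficient with last exponent 0 vanishes
        have hzero' : ∀ σ, ∀ b ∈ Finset.Nat.antidiagonalTuple (m + 1) (n + 1),
            b (Fin.last m) = 0 → L σ b = 0 := by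
          intro σ b hb hbl
          obtain ⟨p, hp0⟩ := insPerm_bijective.surjective σ
          have hp : insPerm p.1 p.2 = σ := hp0
          have hsnoc : (Fin.snoc (Fin.init b) 0 : Fin (m + 1) → ℕ) = b := by
            conv_rhs => rw [← Fin.snoc_init_self b]
            rw [hbl]
          have hmem : Fin.init b ∈ Finset.Nat.antidiagonalTuple m (n + 1) := by
            rw [Finset.Nat.mem_antidiagonalTuple] at hb ⊢
            rw [Fin.sum_univ_castSucc, hbl, add_zero] at hb
            exact hb
          have := hc p.2 (Fin.init b) hmem p.1
          rw [hsnoc, hp] at this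
          exact this
        obtain ⟨σw, bw, hbw, hLw⟩ := hL
        have hbl : bw (Fin.last m) ≠ 0 := fun h => hLw (hzero' σw bw hbw h)
        set e : Fin (m + 1) → ℕ := fun j => if j = Fin.last m then 1 else 0 with he
        have hce : ∀ j : Fin m, e (Fin.castSucc j) = 0 := by
          intro j
          rw [he]
          exact if_neg (Fin.castSucc_lt_last j).ne
        have hle : e (Fin.last m) = 1 := if_pos rfl
        set Lt : Equiv.Perm (Fin (m + 1)) → (Fin (m + 1) → ℕ) → F :=
          fun σ b => L σ (fun j => b j + e j) with hLt
        have hwmem : (fun j => bw j - e j) ∈ Finset.Nat.antidiagonalTuple (m + 1) n := by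
          rw [Finset.Nat.mem_antidiagonalTuple]
          rw [Finset.Nat.mem_antidiagonalTuple, Fin.sum_univ_castSucc] at hbw
          rw [Fin.sum_univ_castSucc]
          simp only [hce, hle, Nat.sub_zero]
          omega
        have hwadd : (fun j => (bw j - e j) + e j) = bw := by
          funext j
          rcases eq_or_ne j (Fin.last m) with rfl | hne
          · simp only [hle]; omega
          · simp only [he, if_neg hne]; omega
        obtain ⟨x, y, hy, hxrep⟩ := IH Lt ⟨σw, (fun j => bw j - e j), hwmem, by
          rw [hLt]
          simp only []
          rw [hwadd]
          exact hLw⟩ (s + 1)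
        refine ⟨Function.update x (Fin.last m) ((adE v)^[s] y), y, ?_, ?_⟩
        · rw [Function.update_self]
        · rw [hxrep]
          apply Finset.sum_congr rfl; intro σ _
          -- transform the sum over `T (n+1)` into the sum over `T n`
          rw [← Finset.sum_filter_add_sum_filter_not
            (Finset.Nat.antidiagonalTuple (m + 1) (n + 1)) (fun b => b (Fin.last m) = 0)]
          have hz1 : ∑ b ∈ (Finset.Nat.antidiagonalTuple (m + 1) (n + 1)).filter
              (fun b => b (Fin.last m) = 0),
              L σ b • (List.ofFn fun j => (adE v)^[b (σ j)]
                (Function.update x (Fin.last m) ((adE v)^[s] y) (σ j))).prod = 0 := by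
            apply Finset.sum_eq_zero
            intro b hb
            rw [Finset.mem_filter] at hb
            rw [hzero' σ b hb.1 hb.2, zero_smul]
          rw [hz1, zero_add]
          symm
          refine Finset.sum_nbij' (fun b => fun j => b j - e j) (fun b => fun j => b j + e j)
            ?_ ?_ ?_ ?_ ?_
          · intro b hb
            simp only [Finset.mem_filter, Finset.Nat.mem_antidiagonalTuple] at hb
            rw [Finset.Nat.mem_antidiagonalTuple]
            obtain ⟨hb1, hb2⟩ := hb
            rw [Fin.sum_univ_castSucc] at hb1 ⊢
            simp only [hce, hle, Nat.sub_zero]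
            omega
          · intro b hb
            rw [Finset.Nat.mem_antidiagonalTuple] at hb
            simp only [Finset.mem_filter, Finset.Nat.mem_antidiagonalTuple]
            rw [Fin.sum_univ_castSucc] at hb ⊢
            simp only [hce, hle, Nat.add_zero]
            omega
          · intro b hb
            simp only [Finset.mem_filter] at hb
            have hbl' : b (Fin.last m) ≠ 0 := hb.2
            funext j
            simp only []
            rcases eq_or_ne j (Fin.last m) with rfl | hne
            · simp only [hle]; omega
            · simp only [he, if_neg hne]; omega
          · intro b _
            funext j
            simp only []
            omega
          · intro b hb
            simp only [Finset.mem_filter] at hb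
            have hbl' : b (Fin.last m) ≠ 0 := hb.2
            have hsc : Lt σ (fun j => b j - e j) = L σ b := by
              rw [hLt]
              show L σ (fun j => b j - e j + e j) = L σ b
              congr 1
              funext j
              rcases eq_or_ne j (Fin.last m) with rfl | hne
              · simp only [hle]; omega
              · simp only [he, if_neg hne]; omega
            rw [hsc]
            refine congrArg (fun t => L σ b • t)
              (congrArg List.prod (congrArg List.ofFn (funext fun j => ?_)))
            show (adE v)^[b (σ j)] (Function.update x (Fin.last m) ((adE v)^[s] y) (σ j))
              = (adE v)^[b (σ j) - e (σ j)] (x (σ j))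
            rcases eq_or_ne (σ j) (Fin.last m) with heq | hne
            · rw [heq, Function.update_self, ← hy,
                ← Function.iterate_add_apply, ← Function.iterate_add_apply]
              congr 1
              simp only [hle]
              omega
            · rw [Function.update_of_ne hne]
              congr 1
              simp only [he, if_neg hne]
              omega
  obtain ⟨x, y, _, hx⟩ := key r lam hlam 0
  exact ⟨x, hx⟩
end
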